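/- arXiv:2205.02119 — 7 statements merged into one kernel-verified Lean document; each statement's English description precedes it below -/
import Mathlib

section
/- Let P be an irreducible aperiodic stochastic matrix on a finite state space X with stationary distribution d, let Π = e dᵀ be the matrix with every row equal to dᵀ, and let Z = Σ_{k=0}^∞ (P − Π)^k be the fundamental matrix of P. Then for any cost function g : X → ℝ, the function h := Z(g − (dᵀg)e) satisfies the Poisson equation g(x) − dᵀg + Σ_y P(x,y) h(y) − h(x) = 0 for all x ∈ X, and moreover dᵀh = 0. -/
/-!
Since `P e = e` and `dᵀe = 1`, the matrix `Q = P - e dᵀ` annihilates `e`, hence so does every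
`A Q^k`, and `A Q^k = A P^k` for any such `A`; in particular `Q^(1 + N q) = Q (P^N)^q`. If all
entries of `P^N` are at least `α > 0`, Doeblin's argument shows that right multiplication by `P^N`
contracts the `ℓ^∞` operator norm of matrices annihilating `e` by the factor `1 - |X| α`, so some
power of `Q` has norm `< 1` and the Neumann series `Z = ∑ Q^k` converges to the inverse of `1 - Q`.
Then `(1 - Q) h = f` reads `h - P h + (dᵀh) e = f`, while `dᵀQ = 0` gives `dᵀZ = dᵀ`, whence
`dᵀh = dᵀf = 0` and `h` solves the Poisson equation.
-/

open Matrix Finset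

theorem summable_pow_of_norm_pow_lt_one {R : Type*} [NormedRing R] [CompleteSpace R] {x : R}
    {m : ℕ} (hm : m ≠ 0) (hx : ‖x ^ m‖ < 1) : Summable (x ^ ·) := by
  have : NeZero m := ⟨hm⟩
  -- split `ℕ` into residue classes: `x ^ (q * m + r) = (x ^ m) ^ q * x ^ r`
  rw [← (Nat.divModEquiv m).symm.summable_iff]
  have := summable_mul_of_summable_norm (summable_norm_geometric_of_norm_lt_one hx)
    (Summable.of_finite (f := fun r : Fin m => ‖x ^ (r : ℕ)‖))
  simpa [Function.comp_def, pow_add, pow_mul'] using this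

namespace Matrix

variable {ι X : Type*} [Fintype X]

theorem card_mul_le_one_of_le_apply [Nonempty X] {S : Matrix X X ℝ} {α : ℝ}
    (hS : ∀ x y, α ≤ S x y) (hS1 : S *ᵥ 1 = 1) : Fintype.card X * α ≤ 1 := by
  obtain ⟨x⟩ := ‹Nonempty X›
  calc Fintype.card X * α = ∑ y, α := by simp
    _ ≤ ∑ y, S x y := sum_le_sum fun y _ => hS x y
    _ = 1 := by simpa [mulVec, dotProduct] using congrFun hS1 x

theorem sum_abs_vecMul_le_of_sum_eq_zero {S : Matrix X X ℝ} {α : ℝ}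
    (hS : ∀ x y, α ≤ S x y) (hS1 : S *ᵥ 1 = 1) {v : X → ℝ} (hv : ∑ x, v x = 0) :
    ∑ y, |(v ᵥ* S) y| ≤ (1 - Fintype.card X * α) * ∑ x, |v x| := by
  -- as `∑ v = 0`, lowering every entry of `S` by `α` does not change `v ᵥ* S`
  have hshift : ∀ y, (v ᵥ* S) y = ∑ x, v x * (S x y - α) := fun y => by
    simp [vecMul, dotProduct, mul_sub, sum_sub_distrib, ← sum_mul, hv]
  have hrow : ∀ x, ∑ y, (S x y - α) = 1 - Fintype.card X * α := fun x => by
    simpa [mulVec, dotProduct, sum_sub_distrib] using congrFun hS1 x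
  calc ∑ y, |(v ᵥ* S) y| ≤ ∑ y, ∑ x, |v x| * (S x y - α) := by
        refine sum_le_sum fun y _ => (hshift y ▸ abs_sum_le_sum_abs _ _).trans_eq ?_
        simp_rw [abs_mul, abs_of_nonneg (sub_nonneg.2 (hS _ y))]
    _ = (1 - Fintype.card X * α) * ∑ x, |v x| := by
        rw [sum_comm, mul_sum]
        simp_rw [← mul_sum, hrow, ← sum_mul, mul_comm]

theorem pow_mulVec_one_of_mulVec_one [DecidableEq X] {S : Matrix X X ℝ} (hS1 : S *ᵥ 1 = 1) (q : ℕ) :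
    S ^ q *ᵥ 1 = 1 := by
  induction q with
  | zero => simp
  | succ q ih => rw [pow_succ, ← mulVec_mulVec, hS1, ih]

theorem mul_replicateRow_eq_zero {A : Matrix ι X ℝ} (hA : A *ᵥ 1 = 0) (d : X → ℝ) :
    A * replicateRow X d = 0 := by
  ext i j
  have hrow : ∑ x, A i x = 0 := by simpa [mulVec, dotProduct] using congrFun hA i
  simp [mul_apply, ← sum_mul, hrow]

section Markov

variable {P : Matrix X X ℝ} {d : X → ℝ}

theorem mul_sub_replicateRow_pow [DecidableEq X] (hP1 : P *ᵥ 1 = 1) {A : Matrix ι X ℝ}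
    (hA : A *ᵥ 1 = 0) (k : ℕ) : A * (P - replicateRow X d) ^ k = A * P ^ k := by
  induction k with
  | zero => rfl
  | succ k ih =>
    have hAPk : (A * P ^ k) *ᵥ 1 = 0 := by
      rw [← mulVec_mulVec, pow_mulVec_one_of_mulVec_one hP1, hA]
    rw [pow_succ, ← Matrix.mul_assoc, ih, Matrix.mul_sub, mul_replicateRow_eq_zero hAPk,
      sub_zero, pow_succ, Matrix.mul_assoc]

theorem sub_replicateRow_mulVec_one (hP1 : P *ᵥ 1 = 1) (hd1 : ∑ x, d x = 1) :
    (P - replicateRow X d) *ᵥ 1 = 0 := by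
  ext x
  simp [sub_mulVec, hP1, replicateRow_mulVec_eq_const, dotProduct, hd1]

theorem vecMul_eq_self_of_one_sub_mul_eq_one [DecidableEq X] (hd1 : ∑ x, d x = 1)
    (hstat : d ᵥ* P = d) {Z : Matrix X X ℝ} (hZ : (1 - (P - replicateRow X d)) * Z = 1) :
    d ᵥ* Z = d := by
  have hdPi : d ᵥ* replicateRow X d = d := by
    ext y
    simp [vecMul, dotProduct, ← sum_mul, hd1]
  have hfix : d ᵥ* (1 - (P - replicateRow X d)) = d := by
    rw [vecMul_sub, vecMul_sub, vecMul_one, hstat, hdPi, sub_self, sub_zero]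
  rw [← hfix, vecMul_vecMul, hZ, vecMul_one, hfix]

theorem poisson_of_one_sub_mul_eq_one [DecidableEq X] (hd1 : ∑ x, d x = 1)
    (hstat : d ᵥ* P = d) {Z : Matrix X X ℝ} (hZ : (1 - (P - replicateRow X d)) * Z = 1) {f : X → ℝ}
    (hf : d ⬝ᵥ f = 0) : f + P *ᵥ (Z *ᵥ f) = Z *ᵥ f ∧ d ⬝ᵥ (Z *ᵥ f) = 0 := by
  have hmean : d ⬝ᵥ (Z *ᵥ f) = 0 := by
    rw [dotProduct_mulVec, vecMul_eq_self_of_one_sub_mul_eq_one hd1 hstat hZ, hf]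
  refine ⟨?_, hmean⟩
  have hsolve : (1 - (P - replicateRow X d)) *ᵥ (Z *ᵥ f) = f := by
    rw [mulVec_mulVec, hZ, one_mulVec]
  rw [sub_mulVec, sub_mulVec, one_mulVec, replicateRow_mulVec_eq_const, hmean,
    Function.const_zero, sub_zero] at hsolve
  exact (sub_eq_iff_eq_add.1 hsolve).symm

end Markov

section LinftyOp

attribute [local instance] Matrix.linftyOpNormedAddCommGroup Matrix.linftyOpNormedRing
  Matrix.linftyOpNormedSpace

theorem linfty_opNorm_le_iff [Fintype ι] {A : Matrix ι X ℝ} {C : ℝ} (hC : 0 ≤ C) :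
    ‖A‖ ≤ C ↔ ∀ i, ∑ j, |A i j| ≤ C := by
  change ‖fun i => WithLp.toLp 1 (A i)‖ ≤ C ↔ _
  simp [pi_norm_le_iff_of_nonneg hC, PiLp.norm_eq_of_L1]

theorem linfty_opNorm_mul_le_of_mulVec_one_eq_zero [Fintype ι] [Nonempty X] {S : Matrix X X ℝ}
    {α : ℝ} (hS : ∀ x y, α ≤ S x y) (hS1 : S *ᵥ 1 = 1) {A : Matrix ι X ℝ} (hA : A *ᵥ 1 = 0) :
    ‖A * S‖ ≤ (1 - Fintype.card X * α) * ‖A‖ := by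
  have hr : 0 ≤ 1 - Fintype.card X * α := sub_nonneg.2 (card_mul_le_one_of_le_apply hS hS1)
  refine (linfty_opNorm_le_iff (mul_nonneg hr (norm_nonneg A))).2 fun i => ?_
  have hrow : ∑ x, A i x = 0 := by simpa [mulVec, dotProduct] using congrFun hA i
  calc ∑ y, |(A * S) i y| = ∑ y, |(A i ᵥ* S) y| := rfl
    _ ≤ (1 - Fintype.card X * α) * ∑ x, |A i x| := sum_abs_vecMul_le_of_sum_eq_zero hS hS1 hrow
    _ ≤ (1 - Fintype.card X * α) * ‖A‖ :=
        mul_le_mul_of_nonneg_left ((linfty_opNorm_le_iff (norm_nonneg A)).1 le_rfl i) hr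

theorem linfty_opNorm_mul_pow_le_of_mulVec_one_eq_zero [Fintype ι] [DecidableEq X] [Nonempty X]
    {S : Matrix X X ℝ} {α : ℝ} (hS : ∀ x y, α ≤ S x y) (hS1 : S *ᵥ 1 = 1) {A : Matrix ι X ℝ}
    (hA : A *ᵥ 1 = 0) (q : ℕ) : ‖A * S ^ q‖ ≤ (1 - Fintype.card X * α) ^ q * ‖A‖ := by
  induction q with
  | zero => simp
  | succ q ih =>
    have hAS : (A * S ^ q) *ᵥ 1 = 0 := by rw [← mulVec_mulVec, pow_mulVec_one_of_mulVec_one hS1, hA]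
    calc ‖A * S ^ (q + 1)‖ = ‖A * S ^ q * S‖ := by rw [pow_succ, Matrix.mul_assoc]
      _ ≤ (1 - Fintype.card X * α) * ‖A * S ^ q‖ :=
          linfty_opNorm_mul_le_of_mulVec_one_eq_zero hS hS1 hAS
      _ ≤ (1 - Fintype.card X * α) * ((1 - Fintype.card X * α) ^ q * ‖A‖) :=
          mul_le_mul_of_nonneg_left ih (sub_nonneg.2 (card_mul_le_one_of_le_apply hS hS1))
      _ = (1 - Fintype.card X * α) ^ (q + 1) * ‖A‖ := by ring

theorem summable_pow_sub_replicateRow [DecidableEq X] [Nonempty X] {P : Matrix X X ℝ}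
    {d : X → ℝ} (hP1 : P *ᵥ 1 = 1) (hd1 : ∑ x, d x = 1)
    (hprim : ∃ N, ∀ x y, 0 < (P ^ N) x y) : Summable ((P - replicateRow X d) ^ ·) := by
  obtain ⟨N, hN⟩ := hprim
  obtain ⟨⟨x₀, y₀⟩, hmin⟩ := Finite.exists_min fun p : X × X => (P ^ N) p.1 p.2
  set Q := P - replicateRow X d
  set r := 1 - Fintype.card X * (P ^ N) x₀ y₀
  have hα : ∀ x y, (P ^ N) x₀ y₀ ≤ (P ^ N) x y := fun x y => hmin (x, y)
  have hPN1 : P ^ N *ᵥ 1 = 1 := pow_mulVec_one_of_mulVec_one hP1 N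
  have hQ : Q *ᵥ 1 = 0 := sub_replicateRow_mulVec_one hP1 hd1
  have hr0 : 0 ≤ r := sub_nonneg.2 (card_mul_le_one_of_le_apply hα hPN1)
  have hr1 : r < 1 := sub_lt_self 1 (mul_pos (by positivity) (hN x₀ y₀))
  obtain ⟨q, hq⟩ := (((tendsto_pow_atTop_nhds_zero_of_lt_one hr0 hr1).mul_const ‖Q‖)
    |>.eventually_lt_const (by simp : (0 : ℝ) * ‖Q‖ < 1)).exists
  have : CompleteSpace (Matrix X X ℝ) := FiniteDimensional.complete ℝ _
  refine summable_pow_of_norm_pow_lt_one (m := 1 + N * q) (by omega) ?_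
  calc ‖Q ^ (1 + N * q)‖ = ‖Q * (P ^ N) ^ q‖ := by
        rw [pow_add, pow_one, mul_sub_replicateRow_pow hP1 hQ, pow_mul]
    _ ≤ r ^ q * ‖Q‖ := linfty_opNorm_mul_pow_le_of_mulVec_one_eq_zero hα hPN1 hQ q
    _ < 1 := hq

end LinftyOp

end Matrix

theorem stmt_2_general (X : Type*) [Fintype X] [DecidableEq X] [Nonempty X]
    (P : Matrix X X ℝ)
    (hP1 : ∀ x, ∑ y, P x y = 1)
    (hprim : ∃ N : ℕ, ∀ x y, 0 < (P ^ N) x y)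
    (d : X → ℝ) (hd1 : ∑ x, d x = 1)
    (hstat : ∀ y, ∑ x, d x * P x y = d y)
    (g : X → ℝ) :
    let Pi : Matrix X X ℝ := Matrix.of fun _ y => d y
    let Z : Matrix X X ℝ := ∑' k : ℕ, (P - Pi) ^ k
    let h : X → ℝ := Z.mulVec (fun x => g x - ∑ y, d y * g y)
    (∀ x, g x - (∑ y, d y * g y) + (∑ y, P x y * h y) - h x = 0)
      ∧ ∑ x, d x * h x = 0 := by
  intro Pi Z h
  have hP1' : P *ᵥ 1 = 1 := funext fun x => by simpa [mulVec, dotProduct] using hP1 x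
  have hZ : (1 - (P - Pi)) * Z = 1 :=
    (summable_pow_sub_replicateRow hP1' hd1 hprim).one_sub_mul_tsum_pow
  have hf : d ⬝ᵥ (fun x => g x - ∑ y, d y * g y) = 0 := by
    simp [dotProduct, mul_sub, sum_sub_distrib, ← sum_mul, hd1]
  obtain ⟨hpoisson, hmean⟩ := poisson_of_one_sub_mul_eq_one hd1 (funext hstat) hZ hf
  refine ⟨fun x => ?_, hmean⟩
  have hx : g x - ∑ y, d y * g y + (P *ᵥ h) x = h x := congrFun hpoisson x
  change g x - _ + (P *ᵥ h) x - h x = 0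
  linarith

/-- For an irreducible aperiodic (primitive) stochastic matrix `P` on a finite
state space with stationary distribution `d`, the function
`h = Z (g - (dᵀg) e)`, where `Z = Σₖ (P − Π)^k` is the fundamental matrix and
`Π = e dᵀ`, solves the Poisson equation, and `dᵀ h = 0`. -/
theorem stmt_2 (X : Type*) [Fintype X] [DecidableEq X] [Nonempty X]
    (P : Matrix X X ℝ)
    (hP0 : ∀ x y, 0 ≤ P x y) (hP1 : ∀ x, ∑ y, P x y = 1)
    (hprim : ∃ N : ℕ, ∀ x y, 0 < (P ^ N) x y)
    (d : X → ℝ) (hd0 : ∀ x, 0 ≤ d x) (hd1 : ∑ x, d x = 1)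
    (hstat : ∀ y, ∑ x, d x * P x y = d y)
    (g : X → ℝ) :
    let Pi : Matrix X X ℝ := Matrix.of fun _ y => d y
    let Z : Matrix X X ℝ := ∑' k : ℕ, (P - Pi) ^ k
    let h : X → ℝ := Z.mulVec (fun x => g x - ∑ y, d y * g y)
    (∀ x, g x - (∑ y, d y * g y) + (∑ y, P x y * h y) - h x = 0)
      ∧ ∑ x, d x * h x = 0 :=
  stmt_2_general X P hP1 hprim d hd1 hstat g
end

section
/- Let P be a stochastic matrix on a finite state space X, μ a probability distribution on X, γ ∈ [0,1), and define the discounted transition matrix P^(γ) := γP + (1−γ) e μᵀ. Then the discounted future state distribution d^(γ), defined by (d^(γ))ᵀ = (1−γ) μᵀ Σ_{t=0}^∞ (γP)^t = (1−γ) μᵀ (I − γP)^{-1}, is a stationary distribution of P^(γ), i.e. (d^(γ))ᵀ P^(γ) = (d^(γ))ᵀ and d^(γ) is a probability distribution. -/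
/-!
Write `A = (1 - γP)⁻¹` and `d = (1 - γ) μ A`. Multiplying by `1 - γP` gives the fixed-point
equation `d = γ dP + (1 - γ) μ`. Since `P` preserves total mass, summing it gives
`∑ d = γ ∑ d + (1 - γ)`, so `∑ d = 1`; and since `d (e μ) = (∑ d) μ`, the same equation says
`d P^(γ) = d`. In the `ℓ∞` operator norm `‖γP‖ ≤ γ < 1`, so `A` is the Neumann series
`∑ (γP)^t`, whose entries are nonnegative; hence `d ≥ 0`.
-/

namespace Matrix

section CommRing

variable {R n : Type*} [CommRing R] [Fintype n]

theorem vecMul_replicateRow (d μ : n → R) :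
    d ᵥ* replicateRow n μ = (∑ i, d i) • μ := by
  ext y
  simp [vecMul, dotProduct, Finset.sum_mul]

theorem vecMul_nonsing_inv_one_sub [DecidableEq n] {N : Matrix n n R} (hN : IsUnit (1 - N).det)
    (v : n → R) : v ᵥ* (1 - N)⁻¹ = v ᵥ* (1 - N)⁻¹ ᵥ* N + v := by
  have h : v ᵥ* (1 - N)⁻¹ ᵥ* (1 - N) = v := by
    rw [vecMul_vecMul, nonsing_inv_mul _ hN, vecMul_one]
  rw [vecMul_sub, vecMul_one] at h
  exact sub_eq_iff_eq_add'.1 h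

theorem vecMul_smul_add_smul_replicateRow {P : Matrix n n R} {γ : R} {d μ : n → R}
    (hd : d = d ᵥ* (γ • P) + (1 - γ) • μ) (hsum : ∑ i, d i = 1) :
    d ᵥ* (γ • P + (1 - γ) • replicateRow n μ) = d := by
  rw [vecMul_add, vecMul_smul, vecMul_smul, vecMul_replicateRow, hsum, one_smul, ← vecMul_smul]
  exact hd.symm

end CommRing

section LinftyOpNorm

attribute [local instance] Matrix.linftyOpNormedRing Matrix.linftyOpNormedAlgebra

variable {n : Type*} [Fintype n] [DecidableEq n] {M : Matrix n n ℝ}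

theorem linfty_opNorm_le_one_of_mem_rowStochastic (hM : M ∈ rowStochastic ℝ n) : ‖M‖ ≤ 1 := by
  rw [← NNReal.coe_one, ← coe_nnnorm, NNReal.coe_le_coe, linfty_opNNNorm_def]
  refine Finset.sup_le fun i _ => ?_
  rw [← NNReal.coe_le_coe]
  simp [Real.norm_of_nonneg (nonneg_of_mem_rowStochastic hM), sum_row_of_mem_rowStochastic hM i]

theorem norm_smul_lt_one_of_mem_rowStochastic (hM : M ∈ rowStochastic ℝ n) {γ : ℝ}
    (hγ : |γ| < 1) : ‖γ • M‖ < 1 :=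
  calc ‖γ • M‖ ≤ ‖γ‖ * ‖M‖ := norm_smul_le γ M
    _ ≤ |γ| * 1 := by
      gcongr
      · exact (Real.norm_eq_abs γ).le
      · exact linfty_opNorm_le_one_of_mem_rowStochastic hM
    _ < 1 := by rwa [mul_one]

theorem isUnit_det_one_sub_smul_of_mem_rowStochastic (hM : M ∈ rowStochastic ℝ n) {γ : ℝ}
    (hγ : |γ| < 1) : IsUnit (1 - γ • M).det :=
  (isUnit_iff_isUnit_det _).mp
    (isUnit_one_sub_of_norm_lt_one (norm_smul_lt_one_of_mem_rowStochastic hM hγ))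

theorem hasSum_geom_series_smul_of_mem_rowStochastic (hM : M ∈ rowStochastic ℝ n) {γ : ℝ}
    (hγ : |γ| < 1) : HasSum (fun t : ℕ => (γ • M) ^ t) (1 - γ • M)⁻¹ := by
  rw [nonsing_inv_eq_ringInverse]
  exact hasSum_geom_series_inverse _ (norm_smul_lt_one_of_mem_rowStochastic hM hγ)

end LinftyOpNorm

theorem vecMul_of_const_row {n : Type*} [Fintype n] (d μ : n → ℝ) :
    d ᵥ* (of fun _ y => μ y) = (∑ i, d i) • μ := by
  ext y
  simp [vecMul, dotProduct, Finset.sum_mul]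

variable {n : Type*} [Fintype n] [DecidableEq n] {M : Matrix n n ℝ}

theorem inv_one_sub_smul_nonneg_of_mem_rowStochastic (hM : M ∈ rowStochastic ℝ n) {γ : ℝ}
    (hγ₀ : 0 ≤ γ) (hγ₁ : γ < 1) (i j : n) : 0 ≤ (1 - γ • M)⁻¹ i j := by
  have hsum := hasSum_geom_series_smul_of_mem_rowStochastic hM (abs_lt.2 ⟨by linarith, hγ₁⟩)
  refine (Pi.hasSum.1 (Pi.hasSum.1 hsum i) j).nonneg fun t => ?_
  rw [smul_pow]
  exact mul_nonneg (pow_nonneg hγ₀ t) (nonneg_of_mem_rowStochastic (pow_mem hM t))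

theorem sum_vecMul_of_mem_rowStochastic (hM : M ∈ rowStochastic ℝ n) (x : n → ℝ) :
    ∑ j, (x ᵥ* M) j = ∑ j, x j := by
  simp only [← dotProduct_one, ← dotProduct_mulVec, one_vecMul_of_mem_rowStochastic hM]

theorem sum_eq_of_eq_vecMul_smul_add {P : Matrix n n ℝ} (hP : P ∈ rowStochastic ℝ n)
    {γ : ℝ} (hγ : γ ≠ 1) {d μ : n → ℝ} (hd : d = d ᵥ* (γ • P) + (1 - γ) • μ) :
    ∑ i, d i = ∑ i, μ i := by
  have h := congrArg (fun v => ∑ i, v i) hd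
  simp only [Pi.add_apply, Pi.smul_apply, vecMul_smul, smul_eq_mul, Finset.sum_add_distrib,
    ← Finset.mul_sum, sum_vecMul_of_mem_rowStochastic hP] at h
  exact mul_left_cancel₀ (sub_ne_zero.2 hγ.symm) (by linear_combination h)

end Matrix

open Matrix

/-- The discounted future state distribution
`(d^(γ))ᵀ = (1−γ) μᵀ Σₜ (γP)^t = (1−γ) μᵀ (I − γP)⁻¹` is a stationary
probability distribution of the discounted transition matrix
`P^(γ) = γP + (1−γ) e μᵀ`. -/
theorem stmt_3 (X : Type*) [Fintype X] [DecidableEq X]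
    (P : Matrix X X ℝ) (hP0 : ∀ x y, 0 ≤ P x y) (hP1 : ∀ x, ∑ y, P x y = 1)
    (μ : X → ℝ) (hμ0 : ∀ x, 0 ≤ μ x) (hμ1 : ∑ x, μ x = 1)
    (γ : ℝ) (hγ : γ ∈ Set.Ico (0 : ℝ) 1) :
    let Pγ : Matrix X X ℝ := γ • P + (1 - γ) • Matrix.of fun _ y => μ y
    let dγ : X → ℝ := (1 - γ) • Matrix.vecMul μ ((1 : Matrix X X ℝ) - γ • P)⁻¹
    ((1 - γ) • Matrix.vecMul μ (∑' t : ℕ, (γ • P) ^ t) = dγ)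
      ∧ Matrix.vecMul dγ Pγ = dγ ∧ (∀ x, 0 ≤ dγ x) ∧ ∑ x, dγ x = 1 := by
  obtain ⟨hγ₀, hγ₁⟩ := hγ
  intro Pγ dγ
  have hP : P ∈ rowStochastic ℝ X := mem_rowStochastic_iff_sum.2 ⟨hP0, hP1⟩
  have hγabs : |γ| < 1 := abs_lt.2 ⟨by linarith, hγ₁⟩
  have hfix : dγ = dγ ᵥ* (γ • P) + (1 - γ) • μ := by
    simp only [dγ, ← smul_vecMul]
    exact vecMul_nonsing_inv_one_sub (isUnit_det_one_sub_smul_of_mem_rowStochastic hP hγabs) _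
  have hsum : ∑ x, dγ x = 1 := hμ1 ▸ sum_eq_of_eq_vecMul_smul_add hP hγ₁.ne hfix
  refine ⟨by rw [(hasSum_geom_series_smul_of_mem_rowStochastic hP hγabs).tsum_eq],
    vecMul_smul_add_smul_replicateRow hfix hsum, fun x => ?_, hsum⟩
  exact mul_nonneg (sub_nonneg.2 hγ₁.le) (Finset.sum_nonneg fun z _ =>
    mul_nonneg (hμ0 z) (inv_one_sub_smul_nonneg_of_mem_rowStochastic hP hγ₀ hγ₁ z x))
end

section
/- Let X be a countable set, V : X → [1,∞), and define the V-weighted ergodicity coefficient τ_{1,V}[A] := sup over signed measures x with ‖x‖_{1,V} = 1 and xᵀe = 0 of ‖Aᵀx‖_{1,V}. Then τ_{1,V}[A] = sup_{x,y∈X} (1/(V(x)+V(y))) Σ_{z∈X} |A(x,z) − A(y,z)| V(z). -/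
/-!
Let `T` be the right-hand side. For `m` with `∑ m = 0`, testing `Aᵀ m` against
`sign (Aᵀ m) · V` writes `‖Aᵀ m‖_{1,V}` as `∑ₓ m x g x`, where
`|g x - g y| ≤ ∑_z |A x z - A y z| V z ≤ T (V x + V y)`.
Such a `g` stays within `T V` of the constant `a = sup (g - T V)`, and since `∑ m = 0`,
`∑ m g = ∑ m (g - a) ≤ T ‖m‖_{1,V}`. Conversely, the normalized dipoles `(δ_x - δ_y) / (V x + V y)`
attain each term of the supremum.
-/

theorem one_div_add_mul_le_iff {a b t c : ℝ} (ha : 0 < a) (hb : 0 < b) :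
    1 / (a + b) * t ≤ c ↔ t ≤ c * a + c * b := by
  rw [← mul_add, one_div, inv_mul_le_iff₀ (add_pos ha hb), mul_comm]

theorem le_ciSup_ciSup_of_forall_le {ι κ : Type*} {f : ι → κ → ℝ} {K : ℝ}
    (h : ∀ i j, f i j ≤ K) (i : ι) (j : κ) : f i j ≤ ⨆ i, ⨆ j, f i j :=
  have : Nonempty κ := ⟨j⟩
  (le_ciSup ⟨K, Set.forall_mem_range.2 (h i)⟩ j).trans <|
    le_ciSup ⟨K, Set.forall_mem_range.2 fun i => ciSup_le (h i)⟩ i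

section WeightedErgodicity

variable {X : Type*} {V : X → ℝ}

theorem abs_le_tsum_abs_mul (hV : ∀ z, 1 ≤ V z) {a : X → ℝ} (ha : Summable fun z => |a z| * V z)
    (z : X) : |a z| ≤ ∑' z, |a z| * V z :=
  (le_mul_of_one_le_right (abs_nonneg _) (hV z)).trans <|
    ha.le_tsum z fun z _ => mul_nonneg (abs_nonneg _) (zero_le_one.trans (hV z))

theorem abs_sub_mul_le (hV : ∀ z, 0 ≤ V z) (a b : X → ℝ) (z : X) :
    |a z - b z| * V z ≤ |a z| * V z + |b z| * V z := by
  rw [← add_mul]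
  exact mul_le_mul_of_nonneg_right (abs_sub _ _) (hV z)

theorem summable_mul_apply_of_tsum_abs_mul_le {A : X → X → ℝ} {K : ℝ} {m : X → ℝ}
    (hV : ∀ x, 1 ≤ V x) (hA : ∀ x, Summable fun z => |A x z| * V z)
    (hK : ∀ x, ∑' z, |A x z| * V z ≤ K * V x) (hm : Summable fun x => |m x| * V x) (z : X) :
    Summable fun x => m x * A x z :=
  (hm.mul_left K).of_norm_bounded fun x => by
    rw [Real.norm_eq_abs, abs_mul, mul_left_comm]
    exact mul_le_mul_of_nonneg_left ((abs_le_tsum_abs_mul hV (hA x) z).trans (hK x))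
      (abs_nonneg _)

theorem summable_abs_sub_mul (hV : ∀ z, 0 ≤ V z) {a b : X → ℝ}
    (ha : Summable fun z => |a z| * V z) (hb : Summable fun z => |b z| * V z) :
    Summable fun z => |a z - b z| * V z :=
  (ha.add hb).of_nonneg_of_le (fun z => mul_nonneg (abs_nonneg _) (hV z)) (abs_sub_mul_le hV a b)

theorem tsum_abs_sub_mul_le (hV : ∀ z, 0 ≤ V z) {a b : X → ℝ}
    (ha : Summable fun z => |a z| * V z) (hb : Summable fun z => |b z| * V z) :
    ∑' z, |a z - b z| * V z ≤ ∑' z, |a z| * V z + ∑' z, |b z| * V z := by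
  rw [← ha.tsum_add hb]
  exact (summable_abs_sub_mul hV ha hb).tsum_le_tsum (abs_sub_mul_le hV a b) (ha.add hb)

theorem exists_abs_sub_le_of_abs_sub_le {g W : X → ℝ} (h : ∀ x y, |g x - g y| ≤ W x + W y) :
    ∃ a, ∀ x, |g x - a| ≤ W x := by
  rcases isEmpty_or_nonempty X with _ | _
  · exact ⟨0, fun x => isEmptyElim x⟩
  have hbdd : ∀ y x, g x - W x ≤ g y + W y := fun y x => by
    linarith [(abs_sub_le_iff.mp (h x y)).1]
  refine ⟨⨆ x, (g x - W x), fun x => abs_sub_le_iff.mpr ⟨?_, ?_⟩⟩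
  · linarith [le_ciSup ⟨g x + W x, Set.forall_mem_range.2 (hbdd x)⟩ x]
  · linarith [ciSup_le (hbdd x)]

theorem tsum_mul_le_of_abs_sub_le {m g : X → ℝ} {T : ℝ} (hV : ∀ x, 1 ≤ V x)
    (hm : Summable fun x => |m x| * V x) (hm0 : ∑' x, m x = 0)
    (hg : ∀ x y, |g x - g y| ≤ T * V x + T * V y) :
    ∑' x, m x * g x ≤ T * ∑' x, |m x| * V x := by
  obtain ⟨a, ha⟩ := exists_abs_sub_le_of_abs_sub_le hg
  have hm' : Summable m :=
    hm.of_norm_bounded fun x => le_mul_of_one_le_right (abs_nonneg _) (hV x)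
  have hbound : ∀ x, |m x * (g x - a)| ≤ T * (|m x| * V x) := fun x => by
    rw [abs_mul, mul_left_comm]
    exact mul_le_mul_of_nonneg_left (ha x) (abs_nonneg _)
  have hmga : Summable fun x => m x * (g x - a) := (hm.mul_left T).of_norm_bounded hbound
  have hshift : ∑' x, m x * (g x - a) = ∑' x, m x * g x := by
    have hmg : Summable fun x => m x * g x :=
      (hmga.add (hm'.mul_left a)).congr fun x => by ring
    simp only [mul_sub, hmg.tsum_sub (hm'.mul_right a), tsum_mul_right, hm0, zero_mul, sub_zero]
  calc ∑' x, m x * g x = ∑' x, m x * (g x - a) := hshift.symm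
    _ ≤ ∑' x, T * (|m x| * V x) :=
      hmga.tsum_le_tsum (fun x => (le_abs_self _).trans (hbound x)) (hm.mul_left T)
    _ = T * ∑' x, |m x| * V x := tsum_mul_left

theorem tsum_abs_tsum_mul_le {m : X → ℝ} {A : X → X → ℝ} {T : ℝ} (hV : ∀ x, 1 ≤ V x)
    (hm : Summable fun x => |m x| * V x) (hm0 : ∑' x, m x = 0)
    (hmA : ∀ z, Summable fun x => m x * A x z)
    (hA : ∀ x y, Summable fun z => |A x z - A y z| * V z)
    (hT : ∀ x y, ∑' z, |A x z - A y z| * V z ≤ T * V x + T * V y) :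
    ∑' z, |∑' x, m x * A x z| * V z ≤ T * ∑' x, |m x| * V x := by
  have hV0 : ∀ x, 0 ≤ V x := fun x => zero_le_one.trans (hV x)
  -- Finite partial sums in `z` avoid exchanging two infinite sums.
  refine Real.tsum_le_of_sum_le (fun z => mul_nonneg (abs_nonneg _) (hV0 z)) fun S => ?_
  set w : X → ℝ := fun z => SignType.sign (∑' x, m x * A x z) * V z
  have hw : ∀ z, |w z| ≤ V z := fun z => by
    rw [abs_mul, abs_of_nonneg (hV0 z)]
    refine mul_le_of_le_one_left (hV0 z) ?_
    rcases SignType.sign (∑' x, m x * A x z) with _ | _ | _ <;> simp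
  calc ∑ z ∈ S, |∑' x, m x * A x z| * V z = ∑ z ∈ S, ∑' x, m x * A x z * w z := by
        refine Finset.sum_congr rfl fun z _ => ?_
        rw [← sign_mul_self, ← tsum_mul_left, ← tsum_mul_right]
        exact tsum_congr fun x => by ring
    _ = ∑' x, m x * ∑ z ∈ S, A x z * w z := by
        rw [← Summable.tsum_finsetSum fun z _ => (hmA z).mul_right (w z)]
        simp only [Finset.mul_sum, mul_assoc]
    _ ≤ T * ∑' x, |m x| * V x := tsum_mul_le_of_abs_sub_le hV hm hm0 fun x y => calc
        |∑ z ∈ S, A x z * w z - ∑ z ∈ S, A y z * w z| = |∑ z ∈ S, (A x z - A y z) * w z| := by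
          rw [← Finset.sum_sub_distrib]; simp only [sub_mul]
      _ ≤ ∑ z ∈ S, |A x z - A y z| * V z :=
          (Finset.abs_sum_le_sum_abs _ _).trans <| Finset.sum_le_sum fun z _ => by
            rw [abs_mul]; exact mul_le_mul_of_nonneg_left (hw z) (abs_nonneg _)
      _ ≤ ∑' z, |A x z - A y z| * V z :=
          (hA x y).sum_le_tsum S fun z _ => mul_nonneg (abs_nonneg _) (hV0 z)
      _ ≤ T * V x + T * V y := hT x y

theorem tsum_comp_pi_single_sub_pi_single [DecidableEq X] {x y : X} (hxy : x ≠ y) (a : ℝ)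
    (f : X → ℝ → ℝ) (hf : ∀ u, f u 0 = 0) :
    ∑' u, f u ((Pi.single x a - Pi.single y a : X → ℝ) u) = f x a + f y (-a) := by
  rw [tsum_eq_sum (s := {x, y}) fun u hu => ?_, Finset.sum_pair hxy]
  · simp [hxy, hxy.symm]
  · simp only [Finset.mem_insert, Finset.mem_singleton, not_or] at hu
    simp [hu.1, hu.2, hf]

theorem exists_tsum_abs_mul_eq_one_tsum_eq_zero (A : X → X → ℝ) (hV : ∀ x, 0 < V x)
    {x y : X} (hxy : x ≠ y) :
    ∃ m : X → ℝ, (∑' u, |m u| * V u) = 1 ∧ (∑' u, m u) = 0 ∧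
      (1 / (V x + V y)) * ∑' z, |A x z - A y z| * V z = ∑' z, |∑' u, m u * A u z| * V z := by
  classical
  have hc : 0 < 1 / (V x + V y) := by have := hV x; have := hV y; positivity
  refine ⟨Pi.single x (1 / (V x + V y)) - Pi.single y (1 / (V x + V y)), ?_, ?_, ?_⟩
  · rw [tsum_comp_pi_single_sub_pi_single hxy _ (fun u t => |t| * V u) (by simp), abs_neg,
      abs_of_pos hc, ← mul_add, one_div_mul_cancel (by have := hV x; have := hV y; positivity)]
  · rw [tsum_comp_pi_single_sub_pi_single hxy _ (fun _ t => t) (by simp)]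
    ring
  · rw [← tsum_mul_left]
    refine tsum_congr fun z => ?_
    rw [tsum_comp_pi_single_sub_pi_single hxy _ (fun u t => t * A u z) (by simp),
      neg_mul, ← sub_eq_add_neg, ← mul_sub, abs_mul, abs_of_pos hc, mul_assoc]

end WeightedErgodicity

theorem stmt_6_general (X : Type*) (V : X → ℝ) (hV : ∀ x, 1 ≤ V x)
    (A : X → X → ℝ)
    (hA : ∀ x, Summable fun z => |A x z| * V z)
    (hAbdd : BddAbove (Set.range fun x => (1 / V x) * ∑' z, |A x z| * V z)) :
    sSup {r | ∃ m : X → ℝ, (∑' x, |m x| * V x) = 1 ∧ (∑' x, m x) = 0 ∧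
        r = ∑' z, |∑' x, m x * A x z| * V z}
      = ⨆ x, ⨆ y, (1 / (V x + V y)) * ∑' z, |A x z - A y z| * V z := by
  obtain ⟨K, hK⟩ := hAbdd
  have hVpos : ∀ x, 0 < V x := fun x => one_pos.trans_le (hV x)
  have hV0 : ∀ x, 0 ≤ V x := fun x => (hVpos x).le
  have hrow : ∀ x, ∑' z, |A x z| * V z ≤ K * V x := fun x => by
    have : 1 / V x * ∑' z, |A x z| * V z ≤ K := hK ⟨x, rfl⟩
    rwa [one_div, inv_mul_le_iff₀ (hVpos x), mul_comm (V x)] at this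
  have hdiff : ∀ x y, Summable fun z => |A x z - A y z| * V z := fun x y =>
    summable_abs_sub_mul hV0 (hA x) (hA y)
  have hbdd : ∀ x y, (1 / (V x + V y)) * ∑' z, |A x z - A y z| * V z ≤ K := fun x y =>
    (one_div_add_mul_le_iff (hVpos x) (hVpos y)).2 <|
      (tsum_abs_sub_mul_le hV0 (hA x) (hA y)).trans (add_le_add (hrow x) (hrow y))
  set T := ⨆ x, ⨆ y, (1 / (V x + V y)) * ∑' z, |A x z - A y z| * V z
  have hT : ∀ x y, ∑' z, |A x z - A y z| * V z ≤ T * V x + T * V y := fun x y =>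
    (one_div_add_mul_le_iff (hVpos x) (hVpos y)).1 (le_ciSup_ciSup_of_forall_le hbdd x y)
  have hT0 : 0 ≤ T := Real.iSup_nonneg fun x => Real.iSup_nonneg fun y =>
    have := hVpos x; have := hVpos y
    mul_nonneg (by positivity) (tsum_nonneg fun z => mul_nonneg (abs_nonneg _) (hV0 z))
  set S := {r | ∃ m : X → ℝ, (∑' x, |m x| * V x) = 1 ∧ (∑' x, m x) = 0 ∧
        r = ∑' z, |∑' x, m x * A x z| * V z}
  have hST : ∀ r ∈ S, r ≤ T := by
    rintro r ⟨m, hm1, hm0, rfl⟩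
    have hm : Summable fun x => |m x| * V x := by
      by_contra h
      simp [tsum_eq_zero_of_not_summable h] at hm1
    simpa [hm1] using tsum_abs_tsum_mul_le hV hm hm0
      (summable_mul_apply_of_tsum_abs_mul_le hV hA hrow hm) hdiff hT
  have hS0 : 0 ≤ sSup S := Real.sSup_nonneg <| by
    rintro r ⟨m, -, -, rfl⟩
    exact tsum_nonneg fun z => mul_nonneg (abs_nonneg _) (hV0 z)
  refine le_antisymm (Real.sSup_le hST hT0) <|
    Real.iSup_le (fun x => Real.iSup_le (fun y => ?_) hS0) hS0
  rcases eq_or_ne x y with rfl | hxy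
  · simpa using hS0
  · exact le_csSup ⟨T, hST⟩ (exists_tsum_abs_mul_eq_one_tsum_eq_zero A hVpos hxy)

/-- The `V`-weighted one-norm ergodicity coefficient
`τ_{1,V}[A] = sup { ‖Aᵀ m‖_{1,V} : ‖m‖_{1,V} = 1, mᵀe = 0 }` equals
`sup_{x,y} (V x + V y)⁻¹ Σ_z |A x z − A y z| V z`. -/
theorem stmt_6 (X : Type*) [Countable X] (V : X → ℝ) (hV : ∀ x, 1 ≤ V x)
    (A : X → X → ℝ)
    (hA : ∀ x, Summable fun z => |A x z| * V z)
    (hAbdd : BddAbove (Set.range fun x => (1 / V x) * ∑' z, |A x z| * V z)) :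
    sSup {r | ∃ m : X → ℝ, (∑' x, |m x| * V x) = 1 ∧ (∑' x, m x) = 0 ∧
        r = ∑' z, |∑' x, m x * A x z| * V z}
      = ⨆ x, ⨆ y, (1 / (V x + V y)) * ∑' z, |A x z - A y z| * V z :=
  stmt_6_general X V hV A hA hAbdd
end

section
/- Let P be an irreducible aperiodic stochastic matrix on a finite state space X with stationary distribution d and group inverse D of I − P. Let M(x,y) denote the mean first hitting time of state y starting from x (with M(x,x) = 0), and let κ := Σ_y d(y) M(x,y) be Kemeny's constant (independent of x). Then τ₁[D] = κ − min_{x,y∈X} Σ_{z∈X} d(z) min(M(x,z), M(y,z)), and in particular τ₁[D] ≤ κ. -/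
/-!
Let `Z = ∑ₜ (Pᵗ - Π)` be the fundamental matrix; the series converges geometrically by Doeblin's
argument, since some power of `P` has all entries positive. Together with the first-step equation
for `M` and Kac's formula `d y * (1 + ∑ z, P y z * M z y) = 1`, the recursion `Z = I - Π + P Z`
makes each column `x ↦ Z x y + d y * M x y` harmonic for `P`, hence constant by the maximum
principle: `Z x y = Z y y - M x y * d y`. So two rows of `D = Z - Π` differ by
`d y * (M b y - M a y)`, and their `ℓ¹` distance is `∑ y, d y * |M a y - M b y| =
2κ - 2 ∑ z, d z * min (M a z) (M b z)`. Finally `τ₁[A]` is half the largest `ℓ¹` distance between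
two rows of `A`: splitting `v = v⁺ - v⁻` writes `vᵀA` as an average of row differences, and
`v = (e_a - e_b) / 2` attains the bound.
-/

open Matrix

/-- The one-norm ergodicity coefficient. -/
noncomputable def tau1 {X : Type*} [Fintype X] (A : X → X → ℝ) : ℝ :=
  sSup {r | ∃ v : X → ℝ, (∑ x, |v x|) = 1 ∧ (∑ x, v x) = 0 ∧
    r = ∑ y, |∑ x, v x * A x y|}

open Finset

section ErgodicityCoefficient

variable {X : Type*} [Fintype X]

theorem sum_abs_sum_mul_le {A : X → X → ℝ} {B : ℝ}
    (hA : ∀ a b, ∑ y, |A a y - A b y| ≤ 2 * B) {v : X → ℝ}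
    (hv1 : ∑ x, |v x| = 1) (hv0 : ∑ x, v x = 0) :
    ∑ y, |∑ x, v x * A x y| ≤ B := by
  have hpq : ∑ x, (v x)⁺ + ∑ x, (v x)⁻ = 1 ∧ ∑ x, (v x)⁺ - ∑ x, (v x)⁻ = 0 := by
    simp only [← sum_add_distrib, ← sum_sub_distrib, posPart_add_negPart, posPart_sub_negPart,
      hv1, hv0, and_self]
  have hp : ∑ x, (v x)⁺ = 1 / 2 := by linarith [hpq.1, hpq.2]
  have hq : ∑ x, (v x)⁻ = 1 / 2 := by linarith [hpq.1, hpq.2]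
  -- With `v = v⁺ - v⁻` and both parts of mass `1/2`, `vᵀA` averages differences of rows.
  have hsplit : ∀ y, ∑ x, v x * A x y
      = 2 * ∑ a, ∑ b, (v a)⁺ * (v b)⁻ * (A a y - A b y) := by
    intro y
    have h₁ : ∑ a, ∑ b, (v a)⁺ * (v b)⁻ * A a y = (∑ a, (v a)⁺ * A a y) * ∑ b, (v b)⁻ := by
      rw [sum_mul_sum]; exact sum_congr rfl fun _ _ => sum_congr rfl fun _ _ => by ring
    have h₂ : ∑ a, ∑ b, (v a)⁺ * (v b)⁻ * A b y = (∑ a, (v a)⁺) * ∑ b, (v b)⁻ * A b y := by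
      rw [sum_mul_sum]; exact sum_congr rfl fun _ _ => sum_congr rfl fun _ _ => by ring
    simp only [mul_sub, sum_sub_distrib, h₁, h₂, hp, hq]
    conv_lhs => rw [← sum_congr rfl fun x _ => congrArg (· * A x y) (posPart_sub_negPart (v x))]
    simp only [sub_mul, sum_sub_distrib]
    ring
  calc ∑ y, |∑ x, v x * A x y|
      ≤ ∑ y, 2 * ∑ a, ∑ b, (v a)⁺ * (v b)⁻ * |A a y - A b y| := by
        refine sum_le_sum fun y _ => ?_
        rw [hsplit, abs_mul, abs_two]
        gcongr
        refine (abs_sum_le_sum_abs _ _).trans (sum_le_sum fun a _ => ?_)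
        refine (abs_sum_le_sum_abs _ _).trans_eq (sum_congr rfl fun b _ => ?_)
        rw [abs_mul, abs_of_nonneg (by positivity)]
    _ = 2 * ∑ a, ∑ b, (v a)⁺ * (v b)⁻ * ∑ y, |A a y - A b y| := by
        rw [← mul_sum]
        simp only [mul_sum]
        rw [sum_comm]
        exact sum_congr rfl fun a _ => sum_comm
    _ ≤ 2 * ∑ a, ∑ b, (v a)⁺ * (v b)⁻ * (2 * B) := by
        gcongr with a _ b _
        exact hA a b
    _ = B := by
        simp only [← sum_mul, ← mul_sum, hp, hq]
        ring

theorem tau1_eq_of_forall_le [Nonempty X] {A : X → X → ℝ} {a b : X}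
    (hab : ∀ a' b', ∑ y, |A a' y - A b' y| ≤ ∑ y, |A a y - A b y|) :
    tau1 A = (∑ y, |A a y - A b y|) / 2 := by
  classical
  rcases subsingleton_or_nontrivial X with hX | hX
  · rw [Subsingleton.elim b a]
    simp only [sub_self, abs_zero, sum_const_zero, zero_div]
    refine (congrArg sSup (Set.eq_empty_of_forall_notMem ?_)).trans Real.sSup_empty
    rintro r ⟨v, hv1, hv0, -⟩
    rw [Fintype.sum_subsingleton _ a] at hv1 hv0
    simp [hv0] at hv1
  obtain ⟨a', b', hne, heq⟩ :
      ∃ a' b', a' ≠ b' ∧ ∑ y, |A a' y - A b' y| = ∑ y, |A a y - A b y| := by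
    by_cases h : a = b
    · obtain ⟨a', b', hne⟩ := exists_pair_ne X
      refine ⟨a', b', hne, le_antisymm (hab a' b') ?_⟩
      simp only [h, sub_self, abs_zero, sum_const_zero]
      positivity
    · exact ⟨a, b, h, rfl⟩
  set v : X → ℝ := fun x => (if x = a' then 1 / 2 else 0) - (if x = b' then 1 / 2 else 0)
  have hv_abs : ∀ x, |v x| = (if x = a' then 1 / 2 else 0) + (if x = b' then 1 / 2 else 0) := by
    intro x
    by_cases ha : x = a' <;> by_cases hb : x = b' <;> simp_all [v]
  rw [← heq]
  refine IsGreatest.csSup_eq ⟨⟨v, ?_, ?_, ?_⟩, ?_⟩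
  · simp only [hv_abs, sum_add_distrib, sum_ite_eq', mem_univ, if_true]
    norm_num
  · simp [v, sum_sub_distrib]
  · have hvA : ∀ y, ∑ x, v x * A x y = (A a' y - A b' y) / 2 := fun y => by
      simp only [v, sub_mul, ite_mul, zero_mul, sum_sub_distrib, sum_ite_eq', mem_univ, if_true]
      ring
    simp only [hvA, abs_div, abs_two, sum_div]
  · rintro r ⟨w, hw1, hw0, rfl⟩
    exact sum_abs_sum_mul_le (fun a b => by linarith [hab a b]) hw1 hw0

end ErgodicityCoefficient

section MarkovChain

variable {X : Type*} [Fintype X] [DecidableEq X] {P : Matrix X X ℝ} {d : X → ℝ} {M : X → X → ℝ}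

theorem pow_succ_apply_pos (hP : P ∈ rowStochastic ℝ X) {N : ℕ}
    (hN : ∀ x y, 0 < (P ^ N) x y) (x y : X) : 0 < (P ^ (N + 1)) x y := by
  obtain ⟨z, hz⟩ : ∃ z, 0 < P x z := by
    by_contra! h
    have := sum_row_of_mem_rowStochastic hP x
    linarith [sum_nonpos fun z (_ : z ∈ univ) => h z]
  rw [pow_succ', mul_apply]
  exact sum_pos' (fun w _ => mul_nonneg (nonneg_of_mem_rowStochastic hP) (hN w y).le)
    ⟨z, mem_univ z, mul_pos hz (hN z y)⟩

omit [DecidableEq X] in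
theorem mulVec_sub_mulVec_le {Q : Matrix X X ℝ} (hQ : ∀ x, ∑ z, Q x z = 1) {ε B : ℝ}
    (hε : ∀ x z, ε ≤ Q x z) {f : X → ℝ} (hf : ∀ z w, f z - f w ≤ B) (x x' : X) :
    (Q *ᵥ f) x - (Q *ᵥ f) x' ≤ (1 - Fintype.card X * ε) * B := by
  obtain ⟨w, -, hw⟩ := exists_min_image univ f ⟨x, mem_univ x⟩
  have hrow : ∀ u, ∑ z, (Q u z - ε) = 1 - Fintype.card X * ε := fun u => by
    simp [sum_sub_distrib, hQ]
  -- Doeblin: every row keeps mass `ε` on each state, so only the excess `1 - |X| ε` can separate.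
  calc (Q *ᵥ f) x - (Q *ᵥ f) x'
      = ∑ z, (Q x z - ε) * f z - ∑ z, (Q x' z - ε) * f z := by
        simp only [mulVec, dotProduct, sub_mul, sum_sub_distrib]
        ring
    _ ≤ ∑ z, (Q x z - ε) * (f w + B) - ∑ z, (Q x' z - ε) * f w := by
        gcongr with z _ z _
        · linarith [hε x z]
        · linarith [hf z w]
        · linarith [hε x' z]
        · exact hw z (mem_univ z)
    _ = (1 - Fintype.card X * ε) * B := by
        rw [← sum_mul, ← sum_mul, hrow, hrow]
        ring

theorem pow_apply_sub_pow_apply_le (hP : P ∈ rowStochastic ℝ X) {N : ℕ} (hN : 0 < N) {ε : ℝ}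
    (hε : ∀ x z, ε ≤ (P ^ N) x z) (t : ℕ) (x x' y : X) :
    (P ^ t) x y - (P ^ t) x' y ≤ (1 - Fintype.card X * ε) ^ (t / N) := by
  induction t using Nat.strong_induction_on generalizing x x' with
  | _ t ih =>
  rcases lt_or_ge t N with htN | hNt
  · rw [Nat.div_eq_of_lt htN, pow_zero]
    have hPt := pow_mem hP t
    linarith [le_one_of_mem_rowStochastic hPt (i := x) (j := y),
      nonneg_of_mem_rowStochastic hPt (i := x') (j := y)]
  obtain ⟨s, rfl⟩ := Nat.exists_eq_add_of_le hNt
  rw [Nat.add_div_left s hN, pow_succ', pow_add]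
  exact mulVec_sub_mulVec_le (sum_row_of_mem_rowStochastic (pow_mem hP N)) hε
    (fun z w => ih s (by omega) z w) x x'

theorem summable_pow_div {c : ℝ} (h0 : 0 ≤ c) (h1 : c < 1) {N : ℕ} (hN : 0 < N) :
    Summable fun t : ℕ => c ^ (t / N) := by
  have : NeZero N := ⟨hN.ne'⟩
  rw [← (Nat.divModEquiv N).symm.summable_iff]
  convert (summable_geometric_of_lt_one h0 h1).mul_of_nonneg
    (hasSum_fintype fun _ : Fin N => (1 : ℝ)).summable (fun _ => pow_nonneg h0 _)
    (fun _ => zero_le_one) using 2 with p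
  rw [Function.comp_apply, Nat.divModEquiv_symm_apply, mul_one, add_comm,
    Nat.add_mul_div_right _ _ hN, Nat.div_eq_of_lt p.2.isLt, zero_add]

theorem vecMul_pow_eq_self (hdP : d ᵥ* P = d) (t : ℕ) : d ᵥ* P ^ t = d := by
  induction t with
  | zero => simp
  | succ t ih => rw [pow_succ, ← vecMul_vecMul, ih, hdP]

theorem pow_mulVec_eq_self {g : X → ℝ} (hg : P *ᵥ g = g) (t : ℕ) : P ^ t *ᵥ g = g := by
  induction t with
  | zero => simp
  | succ t ih => rw [pow_succ, ← mulVec_mulVec, hg, ih]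

theorem abs_pow_apply_sub_le (hP : P ∈ rowStochastic ℝ X) {N : ℕ} (hN : 0 < N) {ε : ℝ}
    (hε : ∀ x z, ε ≤ (P ^ N) x z) (hd0 : ∀ x, 0 ≤ d x) (hd1 : ∑ x, d x = 1)
    (hdP : d ᵥ* P = d) (t : ℕ) (x y : X) :
    |(P ^ t) x y - d y| ≤ (1 - Fintype.card X * ε) ^ (t / N) := by
  have hdy : ∑ u, d u * (P ^ t) u y = d y := congrFun (vecMul_pow_eq_self hdP t) y
  have hosc : ∀ u, |(P ^ t) x y - (P ^ t) u y| ≤ (1 - Fintype.card X * ε) ^ (t / N) :=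
    fun u => abs_sub_le_iff.2
      ⟨pow_apply_sub_pow_apply_le hP hN hε t x u y, pow_apply_sub_pow_apply_le hP hN hε t u x y⟩
  calc |(P ^ t) x y - d y| = |∑ u, d u * ((P ^ t) x y - (P ^ t) u y)| := by
        rw [← hdy]
        simp only [mul_sub, sum_sub_distrib, ← sum_mul, hd1, one_mul]
    _ ≤ ∑ u, d u * (1 - Fintype.card X * ε) ^ (t / N) := by
        refine (abs_sum_le_sum_abs _ _).trans (sum_le_sum fun u _ => ?_)
        rw [abs_mul, abs_of_nonneg (hd0 u)]
        exact mul_le_mul_of_nonneg_left (hosc u) (hd0 u)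
    _ = (1 - Fintype.card X * ε) ^ (t / N) := by rw [← sum_mul, hd1, one_mul]

theorem summable_pow_sub_stationary [Nonempty X] (hP : P ∈ rowStochastic ℝ X) {N : ℕ}
    (hN : ∀ x y, 0 < (P ^ N) x y) (hd0 : ∀ x, 0 ≤ d x) (hd1 : ∑ x, d x = 1)
    (hdP : d ᵥ* P = d) :
    Summable fun t : ℕ => P ^ t - of fun _ y => d y := by
  obtain ⟨⟨x₀, y₀⟩, hmin⟩ := Finite.exists_min fun p : X × X => (P ^ (N + 1)) p.1 p.2
  set ε := (P ^ (N + 1)) x₀ y₀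
  have hε : ∀ x z, ε ≤ (P ^ (N + 1)) x z := fun x z => hmin (x, z)
  have hε0 : 0 < ε := pow_succ_apply_pos hP hN x₀ y₀
  have hc0 : 0 ≤ 1 - Fintype.card X * ε := by
    have hrow : ∑ _z : X, ε ≤ 1 :=
      (sum_le_sum fun z _ => hε x₀ z).trans_eq (sum_row_of_mem_rowStochastic (pow_mem hP _) x₀)
    simp only [sum_const, card_univ, nsmul_eq_mul] at hrow
    linarith
  have hc1 : 1 - Fintype.card X * ε < 1 := by
    have : (0 : ℝ) < Fintype.card X := Nat.cast_pos.2 Fintype.card_pos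
    nlinarith
  refine Pi.summable.2 fun x => Pi.summable.2 fun y => ?_
  refine Summable.of_norm_bounded (summable_pow_div hc0 hc1 N.succ_pos) fun t => ?_
  simpa using abs_pow_apply_sub_le hP N.succ_pos hε hd0 hd1 hdP t x y

omit [DecidableEq X] in
theorem apply_eq_of_mulVec_eq_self {Q : Matrix X X ℝ} (hQ : ∀ x, ∑ z, Q x z = 1)
    (hpos : ∀ x z, 0 < Q x z) {g : X → ℝ} (hg : Q *ᵥ g = g) (x x' : X) : g x = g x' := by
  obtain ⟨m, -, hm⟩ := exists_max_image univ g ⟨x, mem_univ x⟩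
  have hzero : ∑ z, Q m z * (g m - g z) = 0 := by
    have hgm : ∑ z, Q m z * g z = g m := congrFun hg m
    simp only [mul_sub, sum_sub_distrib, ← sum_mul, hQ, one_mul, hgm, sub_self]
  have hconst : ∀ z, g z = g m := fun z => by
    have := (sum_eq_zero_iff_of_nonneg fun z _ =>
      mul_nonneg (hpos m z).le (sub_nonneg.2 (hm z (mem_univ z)))).1 hzero z (mem_univ z)
    rcases mul_eq_zero.1 this with h | h
    · exact absurd h (hpos m z).ne'
    · linarith
  rw [hconst x, hconst x']

omit [DecidableEq X] in
theorem stationary_mul_return_time_eq_one (hd1 : ∑ x, d x = 1) (hdP : d ᵥ* P = d)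
    (hMdiag : ∀ x, M x x = 0) (hMoff : ∀ x y, x ≠ y → M x y = 1 + ∑ z, P x z * M z y) (y : X) :
    d y * (1 + ∑ z, P y z * M z y) = 1 := by
  classical
  set m : X → ℝ := fun z => M z y
  have hbal : ∑ x, d x * (m x - (P *ᵥ m) x) = 0 := by
    have : d ⬝ᵥ (P *ᵥ m) = d ⬝ᵥ m := by rw [dotProduct_mulVec, hdP]
    simp only [mul_sub, sum_sub_distrib]
    exact sub_eq_zero.2 this.symm
  have hterm : ∀ x, d x * (m x - (P *ᵥ m) x)
      = d x - if x = y then d y * (1 + (P *ᵥ m) y) else 0 := by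
    intro x
    by_cases h : x = y
    · subst h
      simp only [m, hMdiag, if_true]
      ring
    · simp only [m, h, if_false, hMoff x y h]
      simp only [mulVec, dotProduct]
      ring
  rw [sum_congr rfl fun x _ => hterm x, sum_sub_distrib, hd1, sum_ite_eq'] at hbal
  simp only [mem_univ, if_true] at hbal
  exact (sub_eq_zero.1 hbal).symm

theorem hittingTime_nonneg (hP : P ∈ rowStochastic ℝ X) (hMdiag : ∀ x, M x x = 0)
    (hMoff : ∀ x y, x ≠ y → M x y = 1 + ∑ z, P x z * M z y) (x y : X) : 0 ≤ M x y := by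
  obtain ⟨p, -, hp⟩ := exists_min_image univ (fun p : X × X => M p.1 p.2) ⟨(x, y), mem_univ _⟩
  refine le_trans ?_ (hp (x, y) (mem_univ _))
  by_contra! hneg
  have hne : p.1 ≠ p.2 := fun h => by simp [h, hMdiag] at hneg
  -- Off the diagonal `M` exceeds a `P`-average of its own values by one, so it cannot be minimal.
  have havg : M p.1 p.2 ≤ ∑ z, P p.1 z * M z p.2 :=
    calc M p.1 p.2 = ∑ z, P p.1 z * M p.1 p.2 := by
          rw [← sum_mul, sum_row_of_mem_rowStochastic hP, one_mul]
      _ ≤ ∑ z, P p.1 z * M z p.2 := sum_le_sum fun z _ =>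
          mul_le_mul_of_nonneg_left (hp (z, p.2) (mem_univ _)) (nonneg_of_mem_rowStochastic hP)
  linarith [hMoff _ _ hne]

noncomputable def fundamentalMatrix (P : Matrix X X ℝ) (d : X → ℝ) : Matrix X X ℝ :=
  ∑' t : ℕ, (P ^ t - of fun _ y => d y)

theorem fundamentalMatrix_eq_one_sub_add_mul (hP : P ∈ rowStochastic ℝ X)
    (hs : Summable fun t : ℕ => P ^ t - of fun _ y => d y) :
    fundamentalMatrix P d = 1 - (of fun _ y => d y) + P * fundamentalMatrix P d := by
  have hPPi : P * (of fun _ y => d y) = of fun _ y => d y := by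
    ext x y
    simp [mul_apply, ← sum_mul, sum_row_of_mem_rowStochastic hP]
  rw [fundamentalMatrix, ← hs.tsum_mul_left, hs.tsum_eq_zero_add]
  simp only [pow_zero, mul_sub, hPPi, pow_succ']

theorem fundamentalMatrix_apply [Nonempty X] (hP : P ∈ rowStochastic ℝ X) {N : ℕ}
    (hN : ∀ x y, 0 < (P ^ N) x y) (hd0 : ∀ x, 0 ≤ d x) (hd1 : ∑ x, d x = 1)
    (hdP : d ᵥ* P = d) (hMdiag : ∀ x, M x x = 0)
    (hMoff : ∀ x y, x ≠ y → M x y = 1 + ∑ z, P x z * M z y) (x y : X) :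
    fundamentalMatrix P d x y = fundamentalMatrix P d y y - M x y * d y := by
  set Z := fundamentalMatrix P d
  have hZ := fundamentalMatrix_eq_one_sub_add_mul hP (summable_pow_sub_stationary hP hN hd0 hd1 hdP)
  set g : X → ℝ := fun x => Z x y + d y * M x y
  have hg : P *ᵥ g = g := by
    funext u
    have hZu : ∑ z, P u z * Z z y = Z u y - (if u = y then 1 else 0) + d y := by
      have := congrFun (congrFun hZ u) y
      simp only [Matrix.add_apply, Matrix.sub_apply, one_apply, of_apply, mul_apply] at this
      linarith
    have hMu : d y * ∑ z, P u z * M z y = d y * M u y - d y + if u = y then 1 else 0 := by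
      by_cases h : u = y
      · subst h
        simp only [hMdiag, if_true]
        linarith [stationary_mul_return_time_eq_one hd1 hdP hMdiag hMoff u]
      · rw [hMoff u y h, if_neg h]
        ring
    have hdM : ∑ z, P u z * (d y * M z y) = d y * ∑ z, P u z * M z y := by
      rw [mul_sum]
      exact sum_congr rfl fun _ _ => by ring
    simp only [g, mulVec, dotProduct, mul_add, sum_add_distrib, hZu, hdM, hMu]
    ring
  have := apply_eq_of_mulVec_eq_self (sum_row_of_mem_rowStochastic (pow_mem hP N)) hN
    (pow_mulVec_eq_self hg N) x y
  simp only [g, hMdiag, mul_zero, add_zero] at this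
  linarith

end MarkovChain

theorem sum_mul_abs_sub {X : Type*} [Fintype X] (d u v : X → ℝ) :
    ∑ z, d z * |u z - v z|
      = ∑ z, d z * u z + ∑ z, d z * v z - 2 * ∑ z, d z * min (u z) (v z) := by
  rw [mul_sum, ← sum_add_distrib, ← sum_sub_distrib]
  refine sum_congr rfl fun z _ => ?_
  rcases le_total (u z) (v z) with h | h
  · rw [min_eq_left h, abs_of_nonpos (sub_nonpos.2 h)]
    ring
  · rw [min_eq_right h, abs_of_nonneg (sub_nonneg.2 h)]
    ring

/-- For an irreducible aperiodic stochastic matrix `P` with stationary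
distribution `d`, group inverse `D` of `I − P`, mean first hitting time matrix
`M` and Kemeny's constant `κ`, one has
`τ₁[D] = κ − min_{x,y} Σ_z d z · min (M x z) (M y z)`, and hence `τ₁[D] ≤ κ`. -/
theorem stmt_8 (X : Type*) [Fintype X] [DecidableEq X] [Nonempty X]
    (P : Matrix X X ℝ)
    (hP0 : ∀ x y, 0 ≤ P x y) (hP1 : ∀ x, ∑ y, P x y = 1)
    (hprim : ∃ N : ℕ, ∀ x y, 0 < (P ^ N) x y)
    (d : X → ℝ) (hd0 : ∀ x, 0 ≤ d x) (hd1 : ∑ x, d x = 1)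
    (hstat : ∀ y, ∑ x, d x * P x y = d y)
    (M : X → X → ℝ)
    (hMdiag : ∀ x, M x x = 0)
    (hMoff : ∀ x y, x ≠ y → M x y = 1 + ∑ z, P x z * M z y)
    (κ : ℝ) (hκ : ∀ x, ∑ y, d y * M x y = κ) :
    let Pi : Matrix X X ℝ := Matrix.of fun _ y => d y
    let Z : Matrix X X ℝ := ∑' t : ℕ, (P ^ t - Pi)
    let D : Matrix X X ℝ := Z - Pi
    tau1 (fun x y => D x y)
        = κ - ⨅ x : X, ⨅ y : X, ∑ z, d z * min (M x z) (M y z)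
      ∧ tau1 (fun x y => D x y) ≤ κ := by
  intro Pi Z D
  have hP : P ∈ rowStochastic ℝ X := mem_rowStochastic_iff_sum.2 ⟨hP0, hP1⟩
  obtain ⟨N, hN⟩ := hprim
  have hZ := fundamentalMatrix_apply hP hN hd0 hd1 (funext hstat) hMdiag hMoff
  have hrow : ∀ a b, (∑ y, |D a y - D b y|) / 2 = κ - ∑ z, d z * min (M a z) (M b z) := by
    intro a b
    have hDab : ∀ y, |D a y - D b y| = d y * |M a y - M b y| := fun y => by
      have : D a y - D b y = d y * (M b y - M a y) := by
        change (fundamentalMatrix P d a y - d y) - (fundamentalMatrix P d b y - d y) = _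
        rw [hZ a y, hZ b y]
        ring
      rw [this, abs_mul, abs_of_nonneg (hd0 y), abs_sub_comm]
    rw [sum_congr rfl fun y _ => hDab y, sum_mul_abs_sub, hκ, hκ]
    ring
  obtain ⟨⟨a, b⟩, hab⟩ := Finite.exists_min fun p : X × X => ∑ z, d z * min (M p.1 z) (M p.2 z)
  have hinf : ⨅ x, ⨅ y, ∑ z, d z * min (M x z) (M y z) = ∑ z, d z * min (M a z) (M b z) :=
    le_antisymm ((ciInf_le (Set.finite_range _).bddBelow a).trans
      (ciInf_le (Set.finite_range _).bddBelow b)) (le_ciInf fun x => le_ciInf fun y => hab (x, y))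
  have htau : tau1 (fun x y => D x y) = κ - ⨅ x, ⨅ y, ∑ z, d z * min (M x z) (M y z) := by
    rw [tau1_eq_of_forall_le (a := a) (b := b) fun a' b' => ?_, hrow, hinf]
    linarith [hrow a' b', hrow a b, hab (a', b')]
  have hM := hittingTime_nonneg hP hMdiag hMoff
  exact ⟨htau, htau ▸ sub_le_self κ (le_ciInf fun x => le_ciInf fun y =>
    sum_nonneg fun z _ => mul_nonneg (hd0 z) (le_min (hM x z) (hM y z)))⟩
end

section
/- Let P₁ and P₂ be stochastic matrices on a finite state space, with discounted versions P_i^(γ) = γP_i + (1−γ)eμᵀ having stationary distributions d_i^(γ) for i = 1,2, and let D₂^(γ) be the group inverse of I − P₂^(γ). Then ‖d₂^(γ) − d₁^(γ)‖₁ ≤ γ · τ₁[D₂^(γ)] · ‖(P₁ − P₂)ᵀ d₁^(γ)‖₁, where τ₁ is the one-norm ergodicity coefficient. -/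
open Matrix

private lemma tau1_bdd' {X : Type*} [Fintype X] (A : X → X → ℝ) :
    BddAbove {r | ∃ v : X → ℝ, (∑ x, |v x|) = 1 ∧ (∑ x, v x) = 0 ∧
      r = ∑ y, |∑ x, v x * A x y|} := by
  refine ⟨∑ x, ∑ y, |A x y|, ?_⟩
  rintro r ⟨v, hv1, -, rfl⟩
  calc ∑ y, |∑ x, v x * A x y| ≤ ∑ y, ∑ x, |v x * A x y| :=
        Finset.sum_le_sum fun y _ => Finset.abs_sum_le_sum_abs _ _
    _ = ∑ x, ∑ y, |v x| * |A x y| := by rw [Finset.sum_comm]; simp [abs_mul]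
    _ ≤ ∑ x, ∑ y, 1 * |A x y| := by
        refine Finset.sum_le_sum fun x _ => Finset.sum_le_sum fun y _ => ?_
        have h : |v x| ≤ 1 := hv1 ▸ Finset.single_le_sum (fun i _ => abs_nonneg (v i)) (Finset.mem_univ x)
        exact mul_le_mul_of_nonneg_right h (abs_nonneg _)
    _ = ∑ x, ∑ y, |A x y| := by simp

private lemma fixed_const' {X : Type*} [Fintype X] (P : Matrix X X ℝ)
    (hP0 : ∀ x y, 0 ≤ P x y) (hP1 : ∀ x, ∑ y, P x y = 1)
    (μ : X → ℝ) (γ : ℝ) (hγ0 : 0 ≤ γ) (hγ1 : γ < 1)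
    (c : X → ℝ)
    (hc : ∀ i, c i = γ * (∑ y, P i y * c y) + (1 - γ) * ∑ y, μ y * c y) :
    ∀ i j, c i = c j := by
  set t := ∑ y, μ y * c y with ht
  have h1γ : (0:ℝ) < 1 - γ := by linarith
  have hub : ∀ i, c i ≤ t := by
    intro i
    have hne : (Finset.univ : Finset X).Nonempty := ⟨i, Finset.mem_univ i⟩
    obtain ⟨i₀, -, hi₀⟩ := Finset.exists_max_image Finset.univ c hne
    have h1 : c i₀ ≤ γ * c i₀ + (1 - γ) * t := by
      have h4 : ∑ y, P i₀ y * c y ≤ ∑ y, P i₀ y * c i₀ :=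
        Finset.sum_le_sum fun y _ => mul_le_mul_of_nonneg_left (hi₀ y (Finset.mem_univ y)) (hP0 i₀ y)
      have hsum : ∑ y, P i₀ y * c i₀ = c i₀ := by
        rw [← Finset.sum_mul, hP1, one_mul]
      have h3 := mul_le_mul_of_nonneg_left h4 hγ0
      rw [hsum] at h3
      have h0 := hc i₀
      linarith
    have h2 : c i₀ ≤ t := by nlinarith
    exact le_trans (hi₀ i (Finset.mem_univ i)) h2
  have hlb : ∀ i, t ≤ c i := by
    intro i
    have hne : (Finset.univ : Finset X).Nonempty := ⟨i, Finset.mem_univ i⟩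
    obtain ⟨i₀, -, hi₀⟩ := Finset.exists_min_image Finset.univ c hne
    have h1 : γ * c i₀ + (1 - γ) * t ≤ c i₀ := by
      have h4 : ∑ y, P i₀ y * c i₀ ≤ ∑ y, P i₀ y * c y :=
        Finset.sum_le_sum fun y _ => mul_le_mul_of_nonneg_left (hi₀ y (Finset.mem_univ y)) (hP0 i₀ y)
      have hsum : ∑ y, P i₀ y * c i₀ = c i₀ := by
        rw [← Finset.sum_mul, hP1, one_mul]
      have h3 := mul_le_mul_of_nonneg_left h4 hγ0
      rw [hsum] at h3
      have h0 := hc i₀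
      linarith
    have h2 : t ≤ c i₀ := by nlinarith
    exact le_trans h2 (hi₀ i (Finset.mem_univ i))
  intro i j
  have e1 := le_antisymm (hub i) (hlb i)
  have e2 := le_antisymm (hub j) (hlb j)
  linarith

private lemma vecMul_smul_mat' {X : Type*} [Fintype X] (c : ℝ) (v : X → ℝ)
    (N : Matrix X X ℝ) : Matrix.vecMul v (c • N) = c • Matrix.vecMul v N := by
  funext y
  simp only [Matrix.vecMul, dotProduct, Matrix.smul_apply, smul_eq_mul, Pi.smul_apply]
  rw [Finset.mul_sum]
  exact Finset.sum_congr rfl fun x _ => by ring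

/-- Perturbation bound for discounted stationary distributions:
`‖d₂^(γ) − d₁^(γ)‖₁ ≤ γ τ₁[D₂^(γ)] ‖(P₁ − P₂)ᵀ d₁^(γ)‖₁`, where `D₂^(γ)` is the
group inverse of `I − P₂^(γ)`. -/
theorem stmt_9 (X : Type*) [Fintype X] [DecidableEq X]
    (P₁ P₂ : Matrix X X ℝ)
    (hP₁0 : ∀ x y, 0 ≤ P₁ x y) (hP₁1 : ∀ x, ∑ y, P₁ x y = 1)
    (hP₂0 : ∀ x y, 0 ≤ P₂ x y) (hP₂1 : ∀ x, ∑ y, P₂ x y = 1)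
    (μ : X → ℝ) (hμ0 : ∀ x, 0 ≤ μ x) (hμ1 : ∑ x, μ x = 1)
    (γ : ℝ) (hγ : γ ∈ Set.Ico (0 : ℝ) 1)
    (d₁ d₂ : X → ℝ)
    (hd₁0 : ∀ x, 0 ≤ d₁ x) (hd₁1 : ∑ x, d₁ x = 1)
    (hd₂0 : ∀ x, 0 ≤ d₂ x) (hd₂1 : ∑ x, d₂ x = 1)
    (hstat₁ : Matrix.vecMul d₁ (γ • P₁ + (1 - γ) • Matrix.of fun _ y => μ y) = d₁)
    (hstat₂ : Matrix.vecMul d₂ (γ • P₂ + (1 - γ) • Matrix.of fun _ y => μ y) = d₂)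
    (D₂ : Matrix X X ℝ)
    (hD₂1 : ((1 : Matrix X X ℝ) - (γ • P₂ + (1 - γ) • Matrix.of fun _ y => μ y))
        * D₂ * ((1 : Matrix X X ℝ) - (γ • P₂ + (1 - γ) • Matrix.of fun _ y => μ y))
        = (1 : Matrix X X ℝ) - (γ • P₂ + (1 - γ) • Matrix.of fun _ y => μ y))
    (hD₂2 : D₂ * ((1 : Matrix X X ℝ) - (γ • P₂ + (1 - γ) • Matrix.of fun _ y => μ y))
        * D₂ = D₂)
    (hD₂3 : D₂ * ((1 : Matrix X X ℝ) - (γ • P₂ + (1 - γ) • Matrix.of fun _ y => μ y))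
        = ((1 : Matrix X X ℝ) - (γ • P₂ + (1 - γ) • Matrix.of fun _ y => μ y)) * D₂) :
    ∑ y, |d₂ y - d₁ y|
      ≤ γ * tau1 (fun x y => D₂ x y) * ∑ y, |∑ x, d₁ x * (P₁ x y - P₂ x y)| := by
  obtain ⟨hγ0, hγ1⟩ := hγ
  set A : Matrix X X ℝ := γ • P₂ + (1 - γ) • Matrix.of fun _ y => μ y with hA
  set B : Matrix X X ℝ := γ • P₁ + (1 - γ) • Matrix.of fun _ y => μ y with hB
  set M : Matrix X X ℝ := 1 - A with hM
  set v : X → ℝ := Matrix.vecMul d₁ (P₁ - P₂) with hv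
  set E : Matrix X X ℝ := 1 - M * D₂ with hE
  have hME : M * E = 0 := by
    have h : M * (M * D₂) = M := by
      rw [← hD₂3, ← Matrix.mul_assoc, hD₂1]
    rw [hE, Matrix.mul_sub, Matrix.mul_one, h, sub_self]
  -- columns of E are constant
  have hconst : ∀ j i i', E i j = E i' j := by
    intro j
    have hc : ∀ i, E i j = γ * (∑ y, P₂ i y * E y j) + (1 - γ) * ∑ y, μ y * E y j := by
      intro i
      have h0 : ∑ k, M i k * E k j = 0 := by
        have h := congrFun (congrFun hME i) j
        simpa [Matrix.mul_apply] using h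
      have h1 : ∑ k, M i k * E k j
          = E i j - (γ * ∑ k, P₂ i k * E k j + (1 - γ) * ∑ k, μ k * E k j) := by
        calc ∑ k, M i k * E k j
            = ∑ k, ((if i = k then E k j else 0)
                - (γ * (P₂ i k * E k j) + (1 - γ) * (μ k * E k j))) :=
              Finset.sum_congr rfl fun k _ => by
                by_cases h : i = k <;>
                  simp [hM, hA, h, Matrix.sub_apply, Matrix.one_apply, Matrix.add_apply,
                    Matrix.smul_apply, Matrix.of_apply, smul_eq_mul] <;> ring
          _ = E i j - (γ * ∑ k, P₂ i k * E k j + (1 - γ) * ∑ k, μ k * E k j) := by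
              rw [Finset.sum_sub_distrib, Finset.sum_add_distrib, Finset.sum_ite_eq,
                if_pos (Finset.mem_univ i), ← Finset.mul_sum, ← Finset.mul_sum]
      rw [h1] at h0
      linarith
    exact fun i i' => fixed_const' P₂ hP₂0 hP₂1 μ γ hγ0 hγ1 (fun k => E k j) hc i i'
  have huE : Matrix.vecMul (d₂ - d₁) E = 0 := by
    funext j
    have h1 : Matrix.vecMul (d₂ - d₁) E j = ∑ i, (d₂ i - d₁ i) * E i j := by
      simp [Matrix.vecMul, dotProduct]
    rw [h1, Finset.sum_congr rfl (fun i _ => by rw [hconst j i j]), ← Finset.sum_mul]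
    simp [Finset.sum_sub_distrib, hd₁1, hd₂1]
  have hd₂M : Matrix.vecMul d₂ M = 0 := by
    rw [hM, Matrix.vecMul_sub, Matrix.vecMul_one, hstat₂, sub_self]
  have hd₁M : Matrix.vecMul d₁ M = γ • v := by
    have hdec : M = (1 - B) + γ • (P₁ - P₂) := by
      rw [hM, hA, hB]; module
    rw [hdec, Matrix.vecMul_add, Matrix.vecMul_sub, Matrix.vecMul_one, hstat₁, sub_self,
      zero_add, vecMul_smul_mat', hv]
  have huM : Matrix.vecMul (d₂ - d₁) M = (-γ) • v := by
    rw [Matrix.sub_vecMul, hd₂M, hd₁M, zero_sub, neg_smul]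
  have hkey : d₂ - d₁ = (-γ) • Matrix.vecMul v D₂ := by
    have h1 : M * D₂ + E = 1 := by rw [hE]; abel
    calc d₂ - d₁ = Matrix.vecMul (d₂ - d₁) 1 := by rw [Matrix.vecMul_one]
      _ = Matrix.vecMul (d₂ - d₁) (M * D₂) + Matrix.vecMul (d₂ - d₁) E := by
          rw [← h1, Matrix.vecMul_add]
      _ = Matrix.vecMul (Matrix.vecMul (d₂ - d₁) M) D₂ := by
          rw [huE, add_zero, Matrix.vecMul_vecMul]
      _ = (-γ) • Matrix.vecMul v D₂ := by
          rw [huM, Matrix.smul_vecMul]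
  have hvy : ∀ y, v y = ∑ x, d₁ x * (P₁ x y - P₂ x y) := by
    intro y; simp [hv, Matrix.vecMul, dotProduct, Matrix.sub_apply]
  have hgoal1 : ∑ y, |d₂ y - d₁ y| = γ * ∑ y, |∑ x, v x * D₂ x y| := by
    rw [Finset.mul_sum]
    refine Finset.sum_congr rfl fun y _ => ?_
    have h := congrFun hkey y
    simp only [Pi.sub_apply, Pi.smul_apply, smul_eq_mul] at h
    rw [h, abs_mul, abs_neg, abs_of_nonneg hγ0]
    congr 1
  rw [hgoal1]
  have hrhs : ∑ y, |∑ x, d₁ x * (P₁ x y - P₂ x y)| = ∑ y, |v y| :=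
    Finset.sum_congr rfl fun y _ => by rw [hvy y]
  rw [hrhs, mul_assoc]
  refine mul_le_mul_of_nonneg_left ?_ hγ0
  -- now: ∑ y, |∑ x, v x * D₂ x y| ≤ tau1 (fun x y => D₂ x y) * ∑ y, |v y|
  have hsum_v : ∑ x, v x = 0 := by
    have : ∑ y, v y = ∑ x, d₁ x * (∑ y, (P₁ x y - P₂ x y)) := by
      rw [Finset.sum_congr rfl fun y _ => hvy y, Finset.sum_comm]
      exact Finset.sum_congr rfl fun x _ => by rw [Finset.mul_sum]
    rw [this]
    refine Finset.sum_eq_zero fun x _ => ?_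
    rw [Finset.sum_sub_distrib, hP₁1 x, hP₂1 x, sub_self, mul_zero]
  set s := ∑ y, |v y| with hs
  by_cases hs0 : s = 0
  · have hv0 : ∀ x, v x = 0 := by
      intro x
      have h := (Finset.sum_eq_zero_iff_of_nonneg (fun i _ => abs_nonneg (v i))).mp hs0
      exact abs_eq_zero.mp (h x (Finset.mem_univ x))
    have : ∑ y, |∑ x, v x * D₂ x y| = 0 := by
      refine Finset.sum_eq_zero fun y _ => ?_
      rw [Finset.sum_eq_zero fun x _ => by rw [hv0 x, zero_mul], abs_zero]
    rw [this, hs0, mul_zero]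
  · have hspos : 0 < s :=
      lt_of_le_of_ne (Finset.sum_nonneg fun i _ => abs_nonneg _) (Ne.symm hs0)
    have hmem : (∑ y, |∑ x, (s⁻¹ * v x) * D₂ x y|) ∈
        {r | ∃ w : X → ℝ, (∑ x, |w x|) = 1 ∧ (∑ x, w x) = 0 ∧
          r = ∑ y, |∑ x, w x * (fun x y => D₂ x y) x y|} := by
      refine ⟨fun x => s⁻¹ * v x, ?_, ?_, rfl⟩
      · simp only [abs_mul, abs_of_pos (inv_pos.mpr hspos)]
        rw [← Finset.mul_sum, ← hs, inv_mul_cancel₀ hs0]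
      · rw [← Finset.mul_sum, hsum_v, mul_zero]
    have hle := le_csSup (tau1_bdd' fun x y => D₂ x y) hmem
    have heq : ∑ y, |∑ x, (s⁻¹ * v x) * D₂ x y| = s⁻¹ * ∑ y, |∑ x, v x * D₂ x y| := by
      rw [Finset.mul_sum]
      refine Finset.sum_congr rfl fun y _ => ?_
      have : ∑ x, (s⁻¹ * v x) * D₂ x y = s⁻¹ * ∑ x, v x * D₂ x y := by
        rw [Finset.mul_sum]; exact Finset.sum_congr rfl fun x _ => by ring
      rw [this, abs_mul, abs_of_pos (inv_pos.mpr hspos)]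
    rw [heq] at hle
    have htau : s⁻¹ * ∑ y, |∑ x, v x * D₂ x y| ≤ tau1 (fun x y => D₂ x y) := hle
    calc ∑ y, |∑ x, v x * D₂ x y|
        = s * (s⁻¹ * ∑ y, |∑ x, v x * D₂ x y|) := by
          rw [← mul_assoc, mul_inv_cancel₀ hs0, one_mul]
      _ ≤ s * tau1 (fun x y => D₂ x y) :=
          mul_le_mul_of_nonneg_left htau (le_of_lt hspos)
      _ = tau1 (fun x y => D₂ x y) * s := mul_comm _ _
end

section
/- Let P be a stochastic matrix on a countable state space X with stationary distribution d, satisfying the single-state drift condition Σ_y P(x,y)V(y) ≤ ε V(x) + b·1_{x = x*} for all x, where V : X → [1,∞), ε ∈ (0,1), b ≥ 0, and x* ∈ X. Then Σ_x d(x) V(x) ≤ b·d(x*)/(1 − ε). -/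
/-- Under the single-state drift condition
`Σ_y P(x,y)V(y) ≤ εV(x) + b·1_{x=x*}`, the stationary distribution `d` of `P`
satisfies `Σ_x d(x)V(x) ≤ b·d(x*)/(1−ε)`. -/
theorem stmt_13 (X : Type*) [Countable X] [DecidableEq X]
    (P : X → X → ℝ) (hP0 : ∀ x y, 0 ≤ P x y) (hP1 : ∀ x, HasSum (P x) 1)
    (V : X → ℝ) (hV : ∀ x, 1 ≤ V x)
    (ε b : ℝ) (hε : ε ∈ Set.Ioo (0 : ℝ) 1) (hb : 0 ≤ b)
    (xstar : X)
    (hPV : ∀ x, Summable fun y => P x y * V y)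
    (hdrift : ∀ x, (∑' y, P x y * V y)
        ≤ ε * V x + b * (if x = xstar then 1 else 0))
    (d : X → ℝ) (hd0 : ∀ x, 0 ≤ d x) (hd1 : HasSum d 1)
    (hstat : ∀ y, ∑' x, d x * P x y = d y) :
    ∑' x, d x * V x ≤ b * d xstar / (1 - ε) := by
  obtain ⟨hε0, hε1⟩ := hε
  have h1ε : (0:ℝ) < 1 - ε := by linarith
  have hdx : 0 ≤ d xstar := hd0 xstar
  have hV0 : ∀ y, 0 ≤ V y := fun y => le_trans zero_le_one (hV y)
  by_cases hS : Summable fun x => d x * V x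
  · set S := ∑' x, d x * V x with hSdef
    have hS0 : 0 ≤ S := tsum_nonneg fun x => mul_nonneg (hd0 x) (hV0 x)
    -- indicator sums
    have hind : HasSum (fun x => if x = xstar then b * d xstar else 0) (b * d xstar) :=
      hasSum_ite_eq xstar (b * d xstar)
    have hindeq : (fun x => b * d x * (if x = xstar then 1 else 0))
        = fun x => if x = xstar then b * d xstar else 0 := by
      funext x
      by_cases h : x = xstar <;> simp [h]
    have hinner : ∀ x, Summable fun y => d x * (P x y * V y) := fun x => (hPV x).mul_left _
    have hbound : ∀ x, d x * ∑' y, P x y * V y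
        ≤ ε * (d x * V x) + b * d x * (if x = xstar then 1 else 0) := by
      intro x
      have h := mul_le_mul_of_nonneg_left (hdrift x) (hd0 x)
      nlinarith [h]
    have hRHSsum : Summable fun x =>
        ε * (d x * V x) + b * d x * (if x = xstar then 1 else 0) := by
      refine Summable.add (hS.mul_left ε) ?_
      rw [hindeq]; exact hind.summable
    have houter : Summable fun x => d x * ∑' y, P x y * V y := by
      refine Summable.of_nonneg_of_le ?_ hbound hRHSsum
      intro x
      exact mul_nonneg (hd0 x) (tsum_nonneg fun y => mul_nonneg (hP0 x y) (hV0 y))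
    have hprod : Summable (Function.uncurry fun x y => d x * (P x y * V y)) := by
      refine (summable_prod_of_nonneg ?_).mpr ⟨fun x => hinner x, ?_⟩
      · intro p
        exact mul_nonneg (hd0 p.1) (mul_nonneg (hP0 p.1 p.2) (hV0 p.2))
      · simp only [Function.uncurry, tsum_mul_left]
        exact houter
    have hcomm : ∑' x, ∑' y, d x * (P x y * V y) = ∑' y, ∑' x, d x * (P x y * V y) :=
      (Summable.tsum_comm hprod).symm
    -- compute S in two ways
    have key : S ≤ ε * S + b * d xstar := by
      have hSeq : S = ∑' x, d x * ∑' y, P x y * V y := by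
        have h1 : S = ∑' y, (∑' x, d x * P x y) * V y := by
          rw [hSdef]
          exact tsum_congr fun y => by rw [hstat y]
        have h2 : ∀ y, (∑' x, d x * P x y) * V y = ∑' x, d x * (P x y * V y) := by
          intro y
          rw [← tsum_mul_right]
          exact tsum_congr fun x => by ring
        have h3 : ∀ x, d x * ∑' y, P x y * V y = ∑' y, d x * (P x y * V y) := by
          intro x
          rw [← tsum_mul_left]
        rw [h1]
        simp_rw [h2, h3]
        exact hcomm.symm
      have hle : ∑' x, d x * ∑' y, P x y * V y
          ≤ ∑' x, (ε * (d x * V x) + b * d x * (if x = xstar then 1 else 0)) :=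
        Summable.tsum_le_tsum hbound houter hRHSsum
      have hrhs : ∑' x, (ε * (d x * V x) + b * d x * (if x = xstar then 1 else 0))
          = ε * S + b * d xstar := by
        rw [Summable.tsum_add (hS.mul_left ε) (by rw [hindeq]; exact hind.summable)]
        rw [tsum_mul_left, hindeq, hind.tsum_eq]
      calc S = ∑' x, d x * ∑' y, P x y * V y := hSeq
        _ ≤ _ := hle
        _ = ε * S + b * d xstar := hrhs
    rw [le_div_iff₀ h1ε]
    nlinarith [key]
  · rw [tsum_eq_zero_of_not_summable hS]
    positivity
end

section
/- Let X be a countable state space and P a stochastic matrix on X with stationary distribution d satisfying a drift condition with Lyapunov function V : X → [1,∞) and dᵀV < ∞. Suppose T : X × X → ℝ₊ is a nonnegative matrix with T = P − ν ωᵀ for a nonnegative vector ν and a probability distribution ω, and ‖T‖_V ≤ λ < 1. Then the V-weighted ergodicity coefficient of D := Σ_{n=0}^∞ T^n (I − e dᵀ) satisfies τ_{1,V}[D] ≤ (1 + ‖e‖_{∞,V} ‖d‖_{1,V})/(1 − λ). -/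
/-- Iterated matrix power of a kernel on a countable state space. -/
noncomputable def matPow {X : Type*} [DecidableEq X] (T : X → X → ℝ) :
    ℕ → X → X → ℝ
  | 0 => fun x y => if x = y then 1 else 0
  | n + 1 => fun x y => ∑' z, T x z * matPow T n z y

section aux
variable {X : Type*} [Countable X] [DecidableEq X]
variable {T : X → X → ℝ} {V : X → ℝ} {lam : ℝ}

lemma matPow_nonneg (hT0 : ∀ x y, 0 ≤ T x y) : ∀ n x y, 0 ≤ matPow T n x y := by
  intro n
  induction n with
  | zero => intro x y; simp only [matPow]; split <;> norm_num
  | succ n ih => intro x y; exact tsum_nonneg fun z => mul_nonneg (hT0 x z) (ih z y)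

lemma matPow_V (hT0 : ∀ x y, 0 ≤ T x y) (hV : ∀ x, 1 ≤ V x)
    (hTVsum : ∀ x, Summable fun y => T x y * V y)
    (hTV : ∀ x, (∑' y, T x y * V y) ≤ lam * V x) (hlam0 : 0 ≤ lam) :
    ∀ n x, Summable (fun y => matPow T n x y * V y) ∧
      (∑' y, matPow T n x y * V y) ≤ lam ^ n * V x := by
  have hV0 : ∀ x, 0 ≤ V x := fun x => le_trans zero_le_one (hV x)
  intro n
  induction n with
  | zero =>
    intro x
    have hfun : (fun y => matPow T 0 x y * V y) = fun y => if y = x then V x else 0 := by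
      funext y
      simp only [matPow]
      by_cases h : x = y
      · subst h; simp
      · rw [if_neg h, if_neg (fun h' : y = x => h h'.symm), zero_mul]
    rw [hfun]
    refine ⟨(hasSum_ite_eq x (V x)).summable, ?_⟩
    rw [(hasSum_ite_eq x (V x)).tsum_eq, pow_zero, one_mul]
  | succ n ih =>
    intro x
    set f : X × X → ℝ := fun p => T x p.1 * (matPow T n p.1 p.2 * V p.2) with hfdef
    have hf0 : ∀ p, 0 ≤ f p := fun p => by
      simp only [hfdef]
      exact mul_nonneg (hT0 _ _) (mul_nonneg (matPow_nonneg hT0 _ _ _) (hV0 _))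
    have hfib : ∀ z, Summable fun y => f (z, y) := fun z => by
      simpa only [hfdef] using ((ih z).1).mul_left (T x z)
    have hfibsum : ∀ z, (∑' y, f (z, y)) = T x z * ∑' y, matPow T n z y * V y := fun z => by
      simp only [hfdef]
      exact tsum_mul_left
    have hbound : ∀ z, (∑' y, f (z, y)) ≤ lam ^ n * (T x z * V z) := by
      intro z
      rw [hfibsum z]
      calc T x z * ∑' y, matPow T n z y * V y ≤ T x z * (lam ^ n * V z) :=
            mul_le_mul_of_nonneg_left (ih z).2 (hT0 x z)
        _ = lam ^ n * (T x z * V z) := by ring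
    have hB : Summable fun z => lam ^ n * (T x z * V z) := (hTVsum x).mul_left _
    have hfs : Summable fun z => ∑' y, f (z, y) :=
      Summable.of_nonneg_of_le (fun z => tsum_nonneg fun y => hf0 (z, y)) hbound hB
    have hf : Summable f := (summable_prod_of_nonneg hf0).2 ⟨hfib, hfs⟩
    have hswap : Summable fun q : X × X => f q.swap := hf.prod_symm
    have hrow : (fun y => matPow T (n+1) x y * V y) = fun y => ∑' z, f (z, y) := by
      funext y
      simp only [hfdef, matPow]
      rw [← tsum_mul_right]
      exact tsum_congr fun z => by ring
    constructor
    · rw [hrow]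
      simpa using hswap.prod
    · rw [hrow]
      have h1 : ∑' y, ∑' z, f (z, y) = ∑' z, ∑' y, f (z, y) := by
        exact (Summable.tsum_comm (f := fun z y => f (z, y)) hf)
      rw [h1]
      calc ∑' z, ∑' y, f (z, y) ≤ ∑' z, lam ^ n * (T x z * V z) :=
            Summable.tsum_le_tsum hbound hfs hB
        _ = lam ^ n * ∑' z, T x z * V z := tsum_mul_left
        _ ≤ lam ^ n * (lam * V x) :=
            mul_le_mul_of_nonneg_left (hTV x) (pow_nonneg hlam0 n)
        _ = lam ^ (n + 1) * V x := by ring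

end aux

/-- If a `V`-uniformly ergodic stochastic matrix `P` with stationary
distribution `d` admits a decomposition `T = P − ν ωᵀ` with `T` nonnegative and
`‖T‖_V ≤ λ < 1`, then the `V`-weighted ergodicity coefficient of
`D = Σₙ Tⁿ (I − e dᵀ)` satisfies
`τ_{1,V}[D] ≤ (1 + ‖e‖_{∞,V} ‖d‖_{1,V}) / (1 − λ)`. -/
theorem stmt_17 (X : Type*) [Countable X] [DecidableEq X]
    (P : X → X → ℝ) (hP0 : ∀ x y, 0 ≤ P x y) (hP1 : ∀ x, HasSum (P x) 1)
    (V : X → ℝ) (hV : ∀ x, 1 ≤ V x)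
    (ε b : ℝ) (hε : ε ∈ Set.Ioo (0 : ℝ) 1) (hb : 0 ≤ b)
    (C : Set X) (hC : C.Finite)
    (hPV : ∀ x, Summable fun y => P x y * V y)
    (hdrift : ∀ x, (∑' y, P x y * V y)
        ≤ ε * V x + b * Set.indicator C (fun _ => 1) x)
    (d : X → ℝ) (hd0 : ∀ x, 0 ≤ d x) (hd1 : HasSum d 1)
    (hstat : ∀ y, ∑' x, d x * P x y = d y)
    (hdV : Summable fun x => d x * V x)
    (T : X → X → ℝ) (hT0 : ∀ x y, 0 ≤ T x y)
    (ν ω : X → ℝ) (hν0 : ∀ x, 0 ≤ ν x)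
    (hω0 : ∀ x, 0 ≤ ω x) (hω1 : HasSum ω 1)
    (hTdef : ∀ x y, T x y = P x y - ν x * ω y)
    (lam : ℝ) (hlam : lam < 1)
    (hTnorm : ∀ x, (∑' y, |T x y| * V y) ≤ lam * V x) :
    let D : X → X → ℝ := fun x y =>
      ∑' n : ℕ, (matPow T n x y - (∑' z, matPow T n x z) * d y)
    sSup {r | ∃ m : X → ℝ, (∑' x, |m x| * V x) = 1 ∧ (∑' x, m x) = 0 ∧
        r = ∑' z, |∑' x, m x * D x z| * V z}
      ≤ (1 + (⨆ x, 1 / V x) * ∑' x, |d x| * V x) / (1 - lam) := by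
  intro D
  have hD : ∀ x y, D x y
      = ∑' n : ℕ, (matPow T n x y - (∑' w, matPow T n x w) * d y) := fun x y => rfl
  have hV0 : ∀ x, (0:ℝ) < V x := fun x => lt_of_lt_of_le one_pos (hV x)
  set s : ℝ := ⨆ x, 1 / V x with hsdef
  have hs0 : 0 ≤ s := Real.iSup_nonneg fun x => div_nonneg zero_le_one (hV0 x).le
  have hdV' : (∑' x, |d x| * V x) = ∑' x, d x * V x :=
    tsum_congr fun x => by rw [abs_of_nonneg (hd0 x)]
  have hdVnn : 0 ≤ ∑' x, d x * V x :=
    tsum_nonneg fun x => mul_nonneg (hd0 x) (hV0 x).le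
  have hBnn : 0 ≤ (1 + s * ∑' x, |d x| * V x) / (1 - lam) := by
    apply div_nonneg
    · rw [hdV']
      nlinarith [mul_nonneg hs0 hdVnn]
    · linarith
  apply Real.sSup_le _ hBnn
  rintro r ⟨m, hm1, hm0, rfl⟩
  -- nonempty
  have hXne : Nonempty X := by
    by_contra hne
    rw [not_nonempty_iff] at hne
    rw [(hasSum_empty (f := fun x => |m x| * V x)).tsum_eq] at hm1
    exact one_ne_zero hm1.symm
  have hlam0 : 0 ≤ lam := by
    obtain ⟨x0⟩ := hXne
    have h1 : 0 ≤ ∑' y, |T x0 y| * V y :=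
      tsum_nonneg fun y => mul_nonneg (abs_nonneg _) (hV0 y).le
    nlinarith [hTnorm x0, hV0 x0]
  -- basic T facts
  have hTle : ∀ x y, T x y ≤ P x y := fun x y => by
    rw [hTdef]; nlinarith [mul_nonneg (hν0 x) (hω0 y)]
  have hTVsum : ∀ x, Summable fun y => T x y * V y := fun x =>
    Summable.of_nonneg_of_le (fun y => mul_nonneg (hT0 x y) (hV0 y).le)
      (fun y => mul_le_mul_of_nonneg_right (hTle x y) (hV0 y).le) (hPV x)
  have hTV : ∀ x, (∑' y, T x y * V y) ≤ lam * V x := fun x =>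
    calc (∑' y, T x y * V y) = ∑' y, |T x y| * V y :=
          tsum_congr fun y => by rw [abs_of_nonneg (hT0 x y)]
      _ ≤ lam * V x := hTnorm x
  have hmp := matPow_V hT0 hV hTVsum hTV hlam0
  -- summability of m
  have hmV_sum : Summable fun x => |m x| * V x := by
    by_contra h
    rw [tsum_eq_zero_of_not_summable h] at hm1
    exact one_ne_zero hm1.symm
  -- s is an upper bound of 1/V
  have hsub : ∀ z, 1 / V z ≤ s := fun z => by
    rw [hsdef]
    refine le_ciSup (f := fun x => 1 / V x) ⟨1, ?_⟩ z
    rintro y ⟨x, rfl⟩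
    rw [div_le_one (hV0 x)]
    exact hV x
  -- entry bounds
  have hentry : ∀ n x z, matPow T n x z * V z ≤ lam ^ n * V x := fun n x z =>
    le_trans (Summable.le_tsum (hmp n x).1 z fun j _ =>
      mul_nonneg (matPow_nonneg hT0 n x j) (hV0 j).le) (hmp n x).2
  have hentry' : ∀ n x z, matPow T n x z ≤ lam ^ n * V x := fun n x z =>
    le_trans (le_mul_of_one_le_right (matPow_nonneg hT0 n x z) (hV z)) (hentry n x z)
  -- row sums
  let ρ : ℕ → X → ℝ := fun n x => ∑' w, matPow T n x w
  have hρdef : ∀ n x, ρ n x = ∑' w, matPow T n x w := fun _ _ => rfl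
  have hρsum : ∀ n x, Summable fun w => matPow T n x w := fun n x =>
    Summable.of_nonneg_of_le (fun w => matPow_nonneg hT0 n x w)
      (fun w => le_mul_of_one_le_right (matPow_nonneg hT0 n x w) (hV w)) (hmp n x).1
  have hρ0 : ∀ n x, 0 ≤ ρ n x := fun n x =>
    tsum_nonneg fun w => matPow_nonneg hT0 n x w
  have hρle : ∀ n x, ρ n x ≤ s * (lam ^ n * V x) := by
    intro n x
    have h1 : ∀ w, matPow T n x w ≤ s * (matPow T n x w * V w) := by
      intro w
      calc matPow T n x w = (matPow T n x w * V w) * (1 / V w) := by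
            rw [mul_one_div, mul_div_assoc, div_self (hV0 w).ne', mul_one]
        _ ≤ (matPow T n x w * V w) * s :=
            mul_le_mul_of_nonneg_left (hsub w)
              (mul_nonneg (matPow_nonneg hT0 n x w) (hV0 w).le)
        _ = s * (matPow T n x w * V w) := mul_comm _ _
    calc ρ n x ≤ ∑' w, s * (matPow T n x w * V w) :=
          Summable.tsum_le_tsum h1 (hρsum n x) ((hmp n x).1.mul_left s)
      _ = s * ∑' w, matPow T n x w * V w := tsum_mul_left
      _ ≤ s * (lam ^ n * V x) := mul_le_mul_of_nonneg_left (hmp n x).2 hs0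
  -- mu
  let μ : ℕ → X → ℝ := fun n z => ∑' x, m x * matPow T n x z
  have hμdef : ∀ n z, μ n z = ∑' x, m x * matPow T n x z := fun _ _ => rfl
  have hμrow_sum : ∀ (n : ℕ) (z : X), Summable fun x => m x * matPow T n x z := by
    intro n z
    apply Summable.of_abs
    apply Summable.of_nonneg_of_le (fun x => abs_nonneg _) _ (hmV_sum.mul_left (lam ^ n))
    intro x
    rw [abs_mul, abs_of_nonneg (matPow_nonneg hT0 n x z)]
    calc |m x| * matPow T n x z ≤ |m x| * (lam ^ n * V x) :=
          mul_le_mul_of_nonneg_left (hentry' n x z) (abs_nonneg _)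
      _ = lam ^ n * (|m x| * V x) := by ring
  have hgkey : ∀ n : ℕ, Summable (fun z => |μ n z| * V z) ∧
      (∑' z, |μ n z| * V z) ≤ lam ^ n := by
    intro n
    let g : X × X → ℝ := fun p => |m p.1| * (matPow T n p.1 p.2 * V p.2)
    have hgdef : ∀ p, g p = |m p.1| * (matPow T n p.1 p.2 * V p.2) := fun _ => rfl
    have hg0 : ∀ p, 0 ≤ g p := fun p =>
      mul_nonneg (abs_nonneg _) (mul_nonneg (matPow_nonneg hT0 _ _ _) (hV0 _).le)
    have hgfib : ∀ x, Summable fun z => g (x, z) := fun x =>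
      (hmp n x).1.mul_left (|m x|)
    have hgfibsum : ∀ x, (∑' z, g (x, z)) ≤ lam ^ n * (|m x| * V x) := by
      intro x
      have h : (∑' z, g (x, z)) = |m x| * ∑' z, matPow T n x z * V z := by
        simp only [hgdef]
        exact tsum_mul_left
      rw [h]
      calc |m x| * ∑' z, matPow T n x z * V z ≤ |m x| * (lam ^ n * V x) :=
            mul_le_mul_of_nonneg_left (hmp n x).2 (abs_nonneg _)
        _ = lam ^ n * (|m x| * V x) := by ring
    have hB : Summable fun x => lam ^ n * (|m x| * V x) := hmV_sum.mul_left _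
    have hgfs : Summable fun x => ∑' z, g (x, z) :=
      Summable.of_nonneg_of_le (fun x => tsum_nonneg fun z => hg0 (x, z)) hgfibsum hB
    have hgsum : Summable g := (summable_prod_of_nonneg hg0).2 ⟨hgfib, hgfs⟩
    have hmarg : Summable fun z => ∑' x, g (x, z) := by
      simpa using hgsum.prod_symm.prod
    have hcol : ∀ z, Summable fun x => |m x| * matPow T n x z := by
      intro z
      apply Summable.of_nonneg_of_le
        (fun x => mul_nonneg (abs_nonneg _) (matPow_nonneg hT0 n x z)) _
        (hmV_sum.mul_left (lam ^ n))
      intro x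
      calc |m x| * matPow T n x z ≤ |m x| * (lam ^ n * V x) :=
            mul_le_mul_of_nonneg_left (hentry' n x z) (abs_nonneg _)
        _ = lam ^ n * (|m x| * V x) := by ring
    have hpt : ∀ z, |μ n z| * V z ≤ ∑' x, g (x, z) := by
      intro z
      have habs : |μ n z| ≤ ∑' x, |m x| * matPow T n x z := by
        rw [hμdef]
        calc |∑' x, m x * matPow T n x z| ≤ ∑' x, |m x * matPow T n x z| := by
              simpa only [Real.norm_eq_abs] using
                norm_tsum_le_tsum_norm (f := fun x => m x * matPow T n x z)
                  (by simpa only [Real.norm_eq_abs] using (hμrow_sum n z).abs)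
          _ = ∑' x, |m x| * matPow T n x z := tsum_congr fun x => by
              rw [abs_mul, abs_of_nonneg (matPow_nonneg hT0 n x z)]
      calc |μ n z| * V z ≤ (∑' x, |m x| * matPow T n x z) * V z :=
            mul_le_mul_of_nonneg_right habs (hV0 z).le
        _ = ∑' x, g (x, z) := by
            rw [← tsum_mul_right]
            exact tsum_congr fun x => by rw [hgdef]; ring
    have hLHS : Summable fun z => |μ n z| * V z :=
      Summable.of_nonneg_of_le (fun z => mul_nonneg (abs_nonneg _) (hV0 z).le) hpt hmarg
    refine ⟨hLHS, ?_⟩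
    calc (∑' z, |μ n z| * V z) ≤ ∑' z, ∑' x, g (x, z) := Summable.tsum_le_tsum hpt hLHS hmarg
      _ = ∑' x, ∑' z, g (x, z) := Summable.tsum_comm (f := fun x z => g (x, z)) hgsum
      _ ≤ ∑' x, lam ^ n * (|m x| * V x) := Summable.tsum_le_tsum hgfibsum hgfs hB
      _ = lam ^ n * ∑' x, |m x| * V x := tsum_mul_left
      _ = lam ^ n := by rw [hm1, mul_one]
  -- a
  let a : ℕ → ℝ := fun n => ∑' x, m x * ρ n x
  have hadef : ∀ n, a n = ∑' x, m x * ρ n x := fun _ => rfl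
  have hasum : ∀ n, Summable fun x => m x * ρ n x := by
    intro n
    apply Summable.of_abs
    apply Summable.of_nonneg_of_le (fun x => abs_nonneg _) _
      (hmV_sum.mul_left (s * lam ^ n))
    intro x
    rw [abs_mul, abs_of_nonneg (hρ0 n x)]
    calc |m x| * ρ n x ≤ |m x| * (s * (lam ^ n * V x)) :=
          mul_le_mul_of_nonneg_left (hρle n x) (abs_nonneg _)
      _ = s * lam ^ n * (|m x| * V x) := by ring
  have haabs : ∀ n, |a n| ≤ s * lam ^ n := by
    intro n
    rw [hadef]
    calc |∑' x, m x * ρ n x| ≤ ∑' x, |m x * ρ n x| := by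
          simpa only [Real.norm_eq_abs] using
            norm_tsum_le_tsum_norm (f := fun x => m x * ρ n x)
              (by simpa only [Real.norm_eq_abs] using (hasum n).abs)
      _ ≤ ∑' x, s * lam ^ n * (|m x| * V x) := by
          apply Summable.tsum_le_tsum _ (hasum n).abs (hmV_sum.mul_left _)
          intro x
          rw [abs_mul, abs_of_nonneg (hρ0 n x)]
          calc |m x| * ρ n x ≤ |m x| * (s * (lam ^ n * V x)) :=
                mul_le_mul_of_nonneg_left (hρle n x) (abs_nonneg _)
            _ = s * lam ^ n * (|m x| * V x) := by ring
      _ = s * lam ^ n * ∑' x, |m x| * V x := tsum_mul_left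
      _ = s * lam ^ n := by rw [hm1, mul_one]
  -- step 1 : rewrite the inner sum
  have hDz : ∀ z, (∑' x, m x * D x z) = ∑' n : ℕ, (μ n z - a n * d z) := by
    intro z
    let F : X → ℕ → ℝ := fun x n => m x * matPow T n x z - m x * ρ n x * d z
    have hFdef : ∀ x n, F x n = m x * matPow T n x z - m x * ρ n x * d z :=
      fun _ _ => rfl
    have hFbound : ∀ x n, |F x n| ≤ (|m x| * V x) * ((1 + s * d z) * lam ^ n) := by
      intro x n
      have h1 : |m x * matPow T n x z| ≤ lam ^ n * (|m x| * V x) := by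
        rw [abs_mul, abs_of_nonneg (matPow_nonneg hT0 n x z)]
        calc |m x| * matPow T n x z ≤ |m x| * (lam ^ n * V x) :=
              mul_le_mul_of_nonneg_left (hentry' n x z) (abs_nonneg _)
          _ = lam ^ n * (|m x| * V x) := by ring
      have h2 : |m x * ρ n x * d z| ≤ s * d z * (lam ^ n * (|m x| * V x)) := by
        rw [abs_mul, abs_mul, abs_of_nonneg (hρ0 n x), abs_of_nonneg (hd0 z)]
        calc |m x| * ρ n x * d z ≤ |m x| * (s * (lam ^ n * V x)) * d z :=
              mul_le_mul_of_nonneg_right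
                (mul_le_mul_of_nonneg_left (hρle n x) (abs_nonneg _)) (hd0 z)
          _ = s * d z * (lam ^ n * (|m x| * V x)) := by ring
      calc |F x n| ≤ |m x * matPow T n x z| + |m x * ρ n x * d z| := by
            rw [hFdef]; exact abs_sub _ _
        _ ≤ lam ^ n * (|m x| * V x) + s * d z * (lam ^ n * (|m x| * V x)) :=
            add_le_add h1 h2
        _ = (|m x| * V x) * ((1 + s * d z) * lam ^ n) := by ring
    have hBprod : Summable fun p : X × ℕ =>
        (|m p.1| * V p.1) * ((1 + s * d z) * lam ^ p.2) := by
      apply Summable.mul_of_nonneg hmV_sum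
        ((summable_geometric_of_lt_one hlam0 hlam).mul_left _)
        (fun x => mul_nonneg (abs_nonneg _) (hV0 x).le)
      intro n
      have : (0:ℝ) ≤ 1 + s * d z := by nlinarith [mul_nonneg hs0 (hd0 z)]
      exact mul_nonneg this (pow_nonneg hlam0 n)
    have hFsum : Summable (Function.uncurry F) := by
      apply Summable.of_abs
      apply Summable.of_nonneg_of_le (fun p => abs_nonneg _) _ hBprod
      intro p
      exact hFbound p.1 p.2
    have hstep1 : ∀ x, m x * D x z = ∑' n : ℕ, F x n := by
      intro x
      rw [hD x z, ← tsum_mul_left]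
      apply tsum_congr
      intro n
      rw [hFdef x n, hρdef n x]
      ring
    calc (∑' x, m x * D x z) = ∑' x, ∑' n : ℕ, F x n := tsum_congr hstep1
      _ = ∑' n : ℕ, ∑' x, F x n := (Summable.tsum_comm hFsum).symm
      _ = ∑' n : ℕ, (μ n z - a n * d z) := by
          apply tsum_congr
          intro n
          have h1 : Summable fun x => m x * matPow T n x z := hμrow_sum n z
          have h2 : Summable fun x => m x * ρ n x * d z := (hasum n).mul_right (d z)
          calc (∑' x, F x n)
              = (∑' x, m x * matPow T n x z) - ∑' x, m x * ρ n x * d z :=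
                Summable.tsum_sub h1 h2
            _ = μ n z - a n * d z := by
                rw [tsum_mul_right, ← hμdef n z, ← hadef n]
  -- step 2 : sum over z
  have hgoalrw : (∑' z, |∑' x, m x * D x z| * V z)
      = ∑' z, |∑' n : ℕ, (μ n z - a n * d z)| * V z :=
    tsum_congr fun z => by rw [hDz z]
  rw [hgoalrw, hdV']
  let h2 : ℕ × X → ℝ := fun p => (|μ p.1 p.2| + |a p.1| * d p.2) * V p.2
  have hh2def : ∀ p, h2 p = (|μ p.1 p.2| + |a p.1| * d p.2) * V p.2 := fun _ => rfl
  have hh20 : ∀ p, 0 ≤ h2 p := fun p =>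
    mul_nonneg (add_nonneg (abs_nonneg _) (mul_nonneg (abs_nonneg _) (hd0 _))) (hV0 _).le
  have hfib2 : ∀ n, Summable fun z => h2 (n, z) := by
    intro n
    apply (((hgkey n).1).add (hdV.mul_left (|a n|))).congr
    intro z
    rw [hh2def]
    ring
  have hGeom : Summable fun n : ℕ => lam ^ n * (1 + s * ∑' x, d x * V x) :=
    (summable_geometric_of_lt_one hlam0 hlam).mul_right _
  have hfibsum2 : ∀ n, (∑' z, h2 (n, z)) ≤ lam ^ n * (1 + s * ∑' x, d x * V x) := by
    intro n
    have heq : (∑' z, h2 (n, z))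
        = (∑' z, |μ n z| * V z) + |a n| * ∑' z, d z * V z := by
      rw [← tsum_mul_left, ← Summable.tsum_add ((hgkey n).1) (hdV.mul_left (|a n|))]
      exact tsum_congr fun z => by rw [hh2def]; ring
    rw [heq]
    have h1 := (hgkey n).2
    have h2' : |a n| * (∑' z, d z * V z) ≤ s * lam ^ n * ∑' z, d z * V z :=
      mul_le_mul_of_nonneg_right (haabs n) hdVnn
    nlinarith
  have hfs2 : Summable fun n => ∑' z, h2 (n, z) :=
    Summable.of_nonneg_of_le (fun n => tsum_nonneg fun z => hh20 (n, z)) hfibsum2 hGeom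
  have hh2sum : Summable h2 := (summable_prod_of_nonneg hh20).2 ⟨hfib2, hfs2⟩
  have hmarg2 : Summable fun z => ∑' n, h2 (n, z) := by
    simpa using hh2sum.prod_symm.prod
  have hfibn : ∀ z, Summable fun n => h2 (n, z) := by
    intro z
    simpa using hh2sum.prod_symm.prod_factor z
  have hsmall : ∀ z, Summable fun n => |μ n z| + |a n| * d z := by
    intro z
    apply ((hfibn z).mul_right (V z)⁻¹).congr
    intro n
    rw [hh2def]
    exact mul_inv_cancel_right₀ (hV0 z).ne' _
  have hinner : ∀ z, Summable fun n => μ n z - a n * d z := by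
    intro z
    apply Summable.of_abs
    apply Summable.of_nonneg_of_le (fun n => abs_nonneg _) _ (hsmall z)
    intro n
    calc |μ n z - a n * d z| ≤ |μ n z| + |a n * d z| := abs_sub _ _
      _ = |μ n z| + |a n| * d z := by rw [abs_mul, abs_of_nonneg (hd0 z)]
  have hptz : ∀ z, |∑' n : ℕ, (μ n z - a n * d z)| * V z ≤ ∑' n, h2 (n, z) := by
    intro z
    have habs2 : |∑' n : ℕ, (μ n z - a n * d z)| ≤ ∑' n, (|μ n z| + |a n| * d z) := by
      calc |∑' n : ℕ, (μ n z - a n * d z)| ≤ ∑' n, |μ n z - a n * d z| := by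
            simpa only [Real.norm_eq_abs] using
              norm_tsum_le_tsum_norm (f := fun n => μ n z - a n * d z)
                (by simpa only [Real.norm_eq_abs] using (hinner z).abs)
        _ ≤ ∑' n, (|μ n z| + |a n| * d z) := by
            apply Summable.tsum_le_tsum _ (hinner z).abs (hsmall z)
            intro n
            calc |μ n z - a n * d z| ≤ |μ n z| + |a n * d z| := abs_sub _ _
              _ = |μ n z| + |a n| * d z := by rw [abs_mul, abs_of_nonneg (hd0 z)]
    calc |∑' n : ℕ, (μ n z - a n * d z)| * V z
        ≤ (∑' n, (|μ n z| + |a n| * d z)) * V z :=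
          mul_le_mul_of_nonneg_right habs2 (hV0 z).le
      _ = ∑' n, h2 (n, z) := by
          rw [← tsum_mul_right]
  have hLHS2 : Summable fun z => |∑' n : ℕ, (μ n z - a n * d z)| * V z :=
    Summable.of_nonneg_of_le (fun z => mul_nonneg (abs_nonneg _) (hV0 z).le) hptz hmarg2
  calc (∑' z, |∑' n : ℕ, (μ n z - a n * d z)| * V z)
      ≤ ∑' z, ∑' n, h2 (n, z) := Summable.tsum_le_tsum hptz hLHS2 hmarg2
    _ = ∑' n, ∑' z, h2 (n, z) := Summable.tsum_comm (f := fun n z => h2 (n, z)) hh2sum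
    _ ≤ ∑' n : ℕ, lam ^ n * (1 + s * ∑' x, d x * V x) :=
        Summable.tsum_le_tsum hfibsum2 hfs2 hGeom
    _ = (1 + s * ∑' x, d x * V x) / (1 - lam) := by
        rw [tsum_mul_right, tsum_geometric_of_lt_one hlam0 hlam]
        rw [mul_comm, ← div_eq_mul_inv]
end
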